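/- arXiv:1505.07508 — 9 statements merged into one kernel-verified Lean document; each statement's English description precedes it below -/
import Mathlib

section
/- Let L be a finite distributive lattice with bottom element ⊥, let c ∈ ℝ, and let f be any real-valued function on the set of join-irreducible elements of L. Then there exists a unique valuation ν : L → ℝ such that ν(⊥) = c and ν(g) = f(g) for every join-irreducible element g ∈ L. -/
/-- A valuation on a lattice: ν(x)+ν(y) = ν(x⊔y)+ν(x⊓y). -/
def IsValuation {α : Type*} [Lattice α] (ν : α → ℝ) : Prop :=
  ∀ x y : α, ν x + ν y = ν (x ⊔ y) + ν (x ⊓ y)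

/-- Join-irreducible element of a lattice with bottom. -/
def JoinIrred {α : Type*} [Lattice α] [OrderBot α] (x : α) : Prop :=
  x ≠ ⊥ ∧ ∀ y z : α, x = y ⊔ z → x = y ∨ x = z

/-- An NM algebra: a bounded distributive lattice with a commutative monoidal
operation `odot` (unit ⊤) and its residuum `himp`, satisfying prelinearity,
the weak nilpotent minimum law and involutivity of the negation ¬x = x → ⊥. -/
class NMAlgebra (α : Type*) extends DistribLattice α, BoundedOrder α where
  odot : α → α → α
  himp : α → α → α
  odot_comm : ∀ x y : α, odot x y = odot y x
  odot_assoc : ∀ x y z : α, odot (odot x y) z = odot x (odot y z)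
  odot_top : ∀ x : α, odot x ⊤ = x
  residuation : ∀ x y z : α, odot x y ≤ z ↔ x ≤ himp y z
  prelinearity : ∀ x y : α, himp x y ⊔ himp y x = ⊤
  wnm : ∀ x y : α, himp (odot x y) ⊥ ⊔ himp (x ⊓ y) (odot x y) = ⊤
  involution : ∀ x : α, himp (himp x ⊥) ⊥ = x

/-- Negation in an NM algebra: ¬x = x → ⊥. -/
def NMAlgebra.neg {α : Type*} [NMAlgebra α] (x : α) : α := NMAlgebra.himp x ⊥

/-- A filter of an NM algebra: a nonempty upper set closed under ⊙. -/
def NMAlgebra.IsFilter {α : Type*} [NMAlgebra α] (S : Set α) : Prop :=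
  S.Nonempty ∧ (∀ x y : α, x ∈ S → x ≤ y → y ∈ S) ∧
    ∀ x y : α, x ∈ S → y ∈ S → NMAlgebra.odot x y ∈ S

/-- A prime filter: a proper filter such that x⊔y ∈ S implies x ∈ S or y ∈ S. -/
def NMAlgebra.IsPrimeFilter {α : Type*} [NMAlgebra α] (S : Set α) : Prop :=
  NMAlgebra.IsFilter S ∧ S ≠ Set.univ ∧ ∀ x y : α, x ⊔ y ∈ S → x ∈ S ∨ y ∈ S

/-- A maximal prime filter: a prime filter maximal w.r.t. inclusion among proper filters. -/
def NMAlgebra.IsMaximalPrimeFilter {α : Type*} [NMAlgebra α] (S : Set α) : Prop :=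
  NMAlgebra.IsPrimeFilter S ∧
    ∀ T : Set α, NMAlgebra.IsFilter T → T ≠ Set.univ → S ⊆ T → T = S

/-- The idempotent Euler characteristic: the valuation with ν(⊥)=0, ν(g)=1 on
idempotent join-irreducibles and ν(g)=0 on the other join-irreducibles. -/
def IsIdemEuler {α : Type*} [NMAlgebra α] (ν : α → ℝ) : Prop :=
  IsValuation ν ∧ ν ⊥ = 0 ∧
    ∀ g : α, JoinIrred g →
      (NMAlgebra.odot g g = g → ν g = 1) ∧ (NMAlgebra.odot g g ≠ g → ν g = 0)

/-- Negation on the three-element NM chain 𝟯 = {0, ½, 1}, modelled as `Fin 3`. -/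
def neg3 : Fin 3 → Fin 3 := ![2, 1, 0]

/-- The monoidal operation of 𝟯: x⊙y = min(x,y) if x > ¬y, and 0 otherwise. -/
def odot3 (x y : Fin 3) : Fin 3 := if neg3 y < x then min x y else 0

/-- The residuum of 𝟯: x→y = 1 if x ≤ y, and max(¬x,y) otherwise. -/
def himp3 (x y : Fin 3) : Fin 3 := if x ≤ y then 2 else max (neg3 x) y

/-- NM homomorphisms into the three-element NM chain 𝟯 (as `Fin 3`, top element `2`). -/
def IsHom3 {α : Type*} [NMAlgebra α] (h : α → Fin 3) : Prop :=
  h ⊥ = 0 ∧ h ⊤ = 2 ∧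
  (∀ x y : α, h (x ⊓ y) = min (h x) (h y)) ∧
  (∀ x y : α, h (x ⊔ y) = max (h x) (h y)) ∧
  (∀ x y : α, h (NMAlgebra.odot x y) = odot3 (h x) (h y)) ∧
  (∀ x y : α, h (NMAlgebra.himp x y) = himp3 (h x) (h y))

/-- Negation on the two-element NM chain 𝟚 = {0, 1}, modelled as `Fin 2`. -/
def neg2 : Fin 2 → Fin 2 := ![1, 0]

/-- The monoidal operation of 𝟚 is ∧ (Boolean). -/
def odot2 (x y : Fin 2) : Fin 2 := min x y

/-- The residuum of 𝟚: Boolean implication x→y = max(¬x, y). -/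
def himp2 (x y : Fin 2) : Fin 2 := max (neg2 x) y

/-- NM homomorphisms into the two-element NM chain 𝟚 (as `Fin 2`, top element `1`). -/
def IsHom2 {α : Type*} [NMAlgebra α] (h : α → Fin 2) : Prop :=
  h ⊥ = 0 ∧ h ⊤ = 1 ∧
  (∀ x y : α, h (x ⊓ y) = min (h x) (h y)) ∧
  (∀ x y : α, h (x ⊔ y) = max (h x) (h y)) ∧
  (∀ x y : α, h (NMAlgebra.odot x y) = odot2 (h x) (h y)) ∧
  (∀ x y : α, h (NMAlgebra.himp x y) = himp2 (h x) (h y))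

/-- The nilpotent minimum t-norm on ℝ (intended on [0,1]). -/
noncomputable def nmT (x y : ℝ) : ℝ := if 1 < x + y then min x y else 0

/-- The residuum of the nilpotent minimum t-norm on ℝ (intended on [0,1]). -/
noncomputable def nmImp (x y : ℝ) : ℝ := if x ≤ y then 1 else max (1 - x) y


open scoped Classical

noncomputable local instance wfAux {L : Type*} [Preorder L] [Finite L] :
    WellFoundedRelation L := ⟨(· < ·), (Finite.to_wellFoundedLT).wf⟩

/-- Coefficients for the valuation, defined by well-founded recursion. -/
noncomputable def dAux {L : Type*} [DistribLattice L] [OrderBot L] [Fintype L]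
    (c : ℝ) (f : L → ℝ) (g : L) : ℝ :=
  f g - c - ∑ g' ∈ (Finset.univ.filter fun g' : L => JoinIrred g' ∧ g' < g).attach,
    dAux c f g'.1
termination_by g
decreasing_by
  exact (Finset.mem_filter.mp g'.2).2.2

lemma dAux_eq {L : Type*} [DistribLattice L] [OrderBot L] [Fintype L]
    (c : ℝ) (f : L → ℝ) (g : L) :
    dAux c f g = f g - c -
      ∑ g' ∈ (Finset.univ.filter fun g' : L => JoinIrred g' ∧ g' < g), dAux c f g' := by
  rw [dAux, ← Finset.sum_attach _ (fun g' => dAux c f g')]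

lemma joinIrred_prime {L : Type*} [DistribLattice L] [OrderBot L] {g : L}
    (hg : JoinIrred g) {x y : L} (h : g ≤ x ⊔ y) : g ≤ x ∨ g ≤ y := by
  have hs : SupIrred g :=
    ⟨fun hm => hg.1 (isMin_iff_eq_bot.mp hm),
     fun b c hbc => (hg.2 b c hbc.symm).imp Eq.symm Eq.symm⟩
  exact hs.supPrime.2 h

/-- existence and uniqueness of a valuation on a finite distributive
lattice with prescribed values at ⊥ and on the join-irreducible elements. -/
theorem stmt0 {L : Type*} [DistribLattice L] [OrderBot L] [Fintype L]
    (c : ℝ) (f : L → ℝ) :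
    ∃! ν : L → ℝ, IsValuation ν ∧ ν ⊥ = c ∧ ∀ g : L, JoinIrred g → ν g = f g := by
  classical
  set S : L → Finset L := fun x => Finset.univ.filter (fun g : L => JoinIrred g ∧ g ≤ x)
    with hS
  set ν : L → ℝ := fun x => c + ∑ g ∈ S x, dAux c f g with hν
  have hmem : ∀ g x : L, g ∈ S x ↔ JoinIrred g ∧ g ≤ x := by
    intro g x; simp [hS]
  have prop1 : IsValuation ν := by
    intro x y
    have hsup : S (x ⊔ y) = S x ∪ S y := by
      ext g
      simp only [Finset.mem_union, hmem]
      constructor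
      · rintro ⟨hg, hle⟩
        exact (joinIrred_prime hg hle).imp (fun h => ⟨hg, h⟩) (fun h => ⟨hg, h⟩)
      · rintro (⟨hg, hle⟩ | ⟨hg, hle⟩)
        · exact ⟨hg, le_sup_of_le_left hle⟩
        · exact ⟨hg, le_sup_of_le_right hle⟩
    have hinf : S (x ⊓ y) = S x ∩ S y := by
      ext g
      simp only [Finset.mem_inter, hmem, le_inf_iff]
      tauto
    have := Finset.sum_union_inter (s₁ := S x) (s₂ := S y) (f := fun g => dAux c f g)
    simp only [hν, hsup, hinf]
    linarith
  have prop2 : ν ⊥ = c := by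
    have : S ⊥ = ∅ := by
      ext g
      simp only [hmem, Finset.notMem_empty, iff_false]
      rintro ⟨hg, hle⟩
      exact hg.1 (le_bot_iff.mp hle)
    simp [hν, this]
  have prop3 : ∀ g : L, JoinIrred g → ν g = f g := by
    intro g hg
    have hins : S g = insert g (Finset.univ.filter fun g' : L => JoinIrred g' ∧ g' < g) := by
      ext a
      simp only [hmem, Finset.mem_insert, Finset.mem_filter, Finset.mem_univ, true_and]
      constructor
      · rintro ⟨ha, hle⟩
        rcases hle.lt_or_eq with h | h
        · exact Or.inr ⟨ha, h⟩
        · exact Or.inl h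
      · rintro (rfl | ⟨ha, hlt⟩)
        · exact ⟨hg, le_rfl⟩
        · exact ⟨ha, hlt.le⟩
    have hnotmem : g ∉ (Finset.univ.filter fun g' : L => JoinIrred g' ∧ g' < g) := by
      simp [lt_irrefl]
    simp only [hν, hins, Finset.sum_insert hnotmem]
    rw [dAux_eq]
    ring
  refine ⟨ν, ⟨prop1, prop2, prop3⟩, ?_⟩
  rintro μ ⟨hval, hbot, hirr⟩
  funext x
  induction x using WellFoundedLT.induction with
  | _ x ih =>
    by_cases hx : x = ⊥
    · subst hx; rw [hbot, prop2]
    by_cases hxi : JoinIrred x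
    · rw [hirr x hxi, prop3 x hxi]
    · have : ∃ y z : L, x = y ⊔ z ∧ x ≠ y ∧ x ≠ z := by
        by_contra hcon
        push_neg at hcon
        exact hxi ⟨hx, fun y z hyz => by
          by_contra hne
          push_neg at hne
          exact hne.2 (hcon y z hyz hne.1)⟩
      obtain ⟨y, z, hyz, hxy, hxz⟩ := this
      have hy : y < x := lt_of_le_of_ne (hyz ▸ le_sup_left) (Ne.symm hxy)
      have hz : z < x := lt_of_le_of_ne (hyz ▸ le_sup_right) (Ne.symm hxz)
      have hyzlt : y ⊓ z < x := lt_of_le_of_lt inf_le_left hy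
      have h1 := hval y z
      have h2 := prop1 y z
      rw [← hyz] at h1 h2
      rw [ih y hy, ih z hz, ih (y ⊓ z) hyzlt] at h1
      linarith
end

section
/- In a finite NM algebra A, every join-irreducible element g satisfies either g⊙g = g or g⊙g = ⊥. -/
/-- in a finite NM algebra every join-irreducible g satisfies
g⊙g = g or g⊙g = ⊥. -/
theorem stmt1 {A : Type*} [NMAlgebra A] [Fintype A] (g : A) (hg : JoinIrred g) :
    NMAlgebra.odot g g = g ∨ NMAlgebra.odot g g = ⊥ := by
  open NMAlgebra in
  -- basic residuation facts
  have res := NMAlgebra.residuation (α := A)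
  have top_odot : ∀ x : A, odot ⊤ x = x := fun x => by
    rw [odot_comm]; exact odot_top x
  -- himp monotone in second argument
  have himp_mono : ∀ x y z : A, y ≤ z → himp x y ≤ himp x z := by
    intro x y z hyz
    rw [← res]
    exact le_trans ((res (himp x y) x y).mpr le_rfl) hyz
  -- ¬(g⊙g) = g → ¬g
  have neg_sq : himp (odot g g) ⊥ = himp g (himp g ⊥) := by
    apply le_antisymm
    · rw [← res, ← res, odot_assoc]
      exact (res _ _ _).mpr le_rfl
    · rw [← res, ← odot_assoc]
      exact (res _ _ _).mpr ((res _ _ _).mpr le_rfl)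
  -- g ⊓ g = g
  have wnm' := NMAlgebra.wnm g g
  rw [inf_idem, neg_sq] at wnm'
  -- both disjuncts ≤ g → (¬g ⊔ g²)
  have h1 : himp g (himp g ⊥) ≤ himp g (himp g ⊥ ⊔ odot g g) :=
    himp_mono _ _ _ le_sup_left
  have h2 : himp g (odot g g) ≤ himp g (himp g ⊥ ⊔ odot g g) :=
    himp_mono _ _ _ le_sup_right
  have htop : (⊤ : A) ≤ himp g (himp g ⊥ ⊔ odot g g) := by
    rw [← wnm']; exact sup_le h1 h2
  have hle : g ≤ himp g ⊥ ⊔ odot g g := by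
    have := (res ⊤ g _).mpr htop
    rwa [top_odot] at this
  -- g² ≤ g
  have sq_le : odot g g ≤ g := by
    rw [res]
    have : (⊤ : A) ≤ himp g g := by
      rw [← res, top_odot]
    exact le_trans le_top this
  -- distribute
  have hsplit : g = (g ⊓ himp g ⊥) ⊔ odot g g := by
    calc g = g ⊓ (himp g ⊥ ⊔ odot g g) := (inf_eq_left.mpr hle).symm
      _ = (g ⊓ himp g ⊥) ⊔ (g ⊓ odot g g) := inf_sup_left _ _ _
      _ = (g ⊓ himp g ⊥) ⊔ odot g g := by rw [inf_eq_right.mpr sq_le]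
  rcases hg.2 _ _ hsplit with h | h
  · right
    have hgn : g ≤ himp g ⊥ := h.le.trans inf_le_right
    have : odot g g ≤ ⊥ := (res g g ⊥).mpr hgn
    exact le_bot_iff.mp this
  · left; exact h.symm
end

section
/- In every NM algebra A, every element x satisfies x = (x⊙x) ∨ (x ∧ ¬x), and moreover (x ∧ ¬x) ⊙ (x ∧ ¬x) = ⊥. -/
namespace NMAlgebra
variable {A : Type*} [NMAlgebra A]

lemma odot_mono_left {a b : A} (c : A) (h : a ≤ b) : odot a c ≤ odot b c := by
  have hb : b ≤ himp c (odot b c) := (residuation b c (odot b c)).mp le_rfl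
  exact (residuation a c (odot b c)).mpr (le_trans h hb)

lemma odot_mono_right (a : A) {b c : A} (h : b ≤ c) : odot a b ≤ odot a c := by
  rw [odot_comm a b, odot_comm a c]; exact odot_mono_left a h

lemma odot_le_left (a b : A) : odot a b ≤ a := by
  have := odot_mono_right a (le_top : b ≤ ⊤)
  rwa [odot_top] at this

lemma odot_neg_le_bot (a : A) : odot (himp a ⊥) a ≤ ⊥ :=
  (residuation (himp a ⊥) a ⊥).mpr le_rfl

lemma odot_himp_le (a b : A) : odot (himp a b) a ≤ b :=
  (residuation (himp a b) a b).mpr le_rfl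

lemma odot_sup (a b c : A) : odot a (b ⊔ c) = odot a b ⊔ odot a c := by
  apply le_antisymm
  · rw [odot_comm]
    refine (residuation (b ⊔ c) a _).mpr (sup_le ?_ ?_)
    · exact (residuation b a _).mp ((odot_comm b a).le.trans le_sup_left)
    · exact (residuation c a _).mp ((odot_comm c a).le.trans le_sup_right)
  · exact sup_le (odot_mono_right a le_sup_left) (odot_mono_right a le_sup_right)

end NMAlgebra

/-- in every NM algebra, x = (x⊙x) ∨ (x ∧ ¬x) and
(x ∧ ¬x)⊙(x ∧ ¬x) = ⊥. -/

theorem stmt2 {A : Type*} [NMAlgebra A] (x : A) :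
    x = NMAlgebra.odot x x ⊔ (x ⊓ NMAlgebra.neg x) ∧
      NMAlgebra.odot (x ⊓ NMAlgebra.neg x) (x ⊓ NMAlgebra.neg x) = ⊥ := by
  constructor
  · -- part 1
    have hzx : NMAlgebra.odot x x ≤ x := NMAlgebra.odot_le_left x x
    have key : x ≤ NMAlgebra.odot x x ⊔ NMAlgebra.neg x := by
      have hw := NMAlgebra.wnm x x
      rw [inf_idem] at hw
      have hx : x = NMAlgebra.odot x (NMAlgebra.himp (NMAlgebra.odot x x) ⊥)
          ⊔ NMAlgebra.odot x (NMAlgebra.himp x (NMAlgebra.odot x x)) := by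
        conv_lhs => rw [← NMAlgebra.odot_top x, ← hw]
        exact NMAlgebra.odot_sup x _ _
      refine hx.le.trans (sup_le ?_ ?_)
      · -- x ⊙ ¬(x⊙x) ≤ ¬x
        apply le_sup_of_le_right
        show _ ≤ NMAlgebra.himp x ⊥
        refine (NMAlgebra.residuation _ x ⊥).mp ?_
        have heq : NMAlgebra.odot (NMAlgebra.odot x (NMAlgebra.himp (NMAlgebra.odot x x) ⊥)) x
            = NMAlgebra.odot (NMAlgebra.himp (NMAlgebra.odot x x) ⊥) (NMAlgebra.odot x x) := by
          rw [NMAlgebra.odot_comm x (NMAlgebra.himp (NMAlgebra.odot x x) ⊥),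
            NMAlgebra.odot_assoc]
        rw [heq]
        exact NMAlgebra.odot_neg_le_bot (NMAlgebra.odot x x)
      · -- x ⊙ (x → x⊙x) ≤ x⊙x
        apply le_sup_of_le_left
        rw [NMAlgebra.odot_comm]
        exact NMAlgebra.odot_himp_le x (NMAlgebra.odot x x)
    calc x = x ⊓ (NMAlgebra.odot x x ⊔ NMAlgebra.neg x) := (inf_eq_left.mpr key).symm
      _ = (x ⊓ NMAlgebra.odot x x) ⊔ (x ⊓ NMAlgebra.neg x) := inf_sup_left x _ _
      _ = NMAlgebra.odot x x ⊔ (x ⊓ NMAlgebra.neg x) := by rw [inf_eq_right.mpr hzx]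
  · -- part 2
    set a := x ⊓ NMAlgebra.neg x with ha
    have h1 : a ≤ NMAlgebra.himp a ⊥ := by
      have hax : a ≤ x := inf_le_left
      have h2 : NMAlgebra.himp x ⊥ ≤ NMAlgebra.himp a ⊥ := by
        refine (NMAlgebra.residuation _ a ⊥).mp ?_
        calc NMAlgebra.odot (NMAlgebra.himp x ⊥) a
            ≤ NMAlgebra.odot (NMAlgebra.himp x ⊥) x := NMAlgebra.odot_mono_right _ hax
          _ ≤ ⊥ := NMAlgebra.odot_neg_le_bot x
      exact le_trans inf_le_right h2
    have h2 : NMAlgebra.odot a a ≤ ⊥ := by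
      calc NMAlgebra.odot a a ≤ NMAlgebra.odot (NMAlgebra.himp a ⊥) a :=
            NMAlgebra.odot_mono_left a h1
        _ ≤ ⊥ := NMAlgebra.odot_neg_le_bot a
    exact le_bot_iff.mp h2
end

section
/- Let A be a finite NM algebra and let ν : A → ℝ be its idempotent Euler characteristic. If x ∈ A satisfies x⊙x = ⊥, then ν(x) = 0. -/

lemma odot_mono_left {A : Type*} [NMAlgebra A] {a b : A} (c : A) (h : a ≤ b) :
    NMAlgebra.odot a c ≤ NMAlgebra.odot b c := by
  have hb : b ≤ NMAlgebra.himp c (NMAlgebra.odot b c) :=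
    (NMAlgebra.residuation b c _).mp le_rfl
  exact (NMAlgebra.residuation a c _).mpr (le_trans h hb)

/-- if x⊙x = ⊥ in a finite NM algebra, then the idempotent Euler
characteristic of x is 0. -/
theorem stmt3 {A : Type*} [NMAlgebra A] [Fintype A] (ν : A → ℝ)
    (hν : IsIdemEuler ν) (x : A) (hx : NMAlgebra.odot x x = ⊥) :
    ν x = 0 := by
  obtain ⟨hval, hbot, hirr⟩ := hν
  have key : ∀ y : A, y ≤ x → ν y = 0 := by
    intro y
    induction y using WellFoundedLT.induction with
    | ind y IH =>
      intro hyx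
      by_cases hy : y = ⊥
      · subst hy; exact hbot
      by_cases hji : JoinIrred y
      · have h1 : NMAlgebra.odot y y ≤ NMAlgebra.odot x x := by
          calc NMAlgebra.odot y y ≤ NMAlgebra.odot x y := odot_mono_left y hyx
            _ = NMAlgebra.odot y x := NMAlgebra.odot_comm x y
            _ ≤ NMAlgebra.odot x x := odot_mono_left x hyx
        have h2 : NMAlgebra.odot y y = ⊥ := le_bot_iff.mp (hx ▸ h1)
        exact (hirr y hji).2 (by rw [h2]; exact fun h => hy h.symm)
      · have hji' : ∃ a b : A, y = a ⊔ b ∧ y ≠ a ∧ y ≠ b := by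
          simp only [JoinIrred, not_and, not_forall] at hji
          obtain ⟨a, b, hab, hne⟩ := hji hy
          push_neg at hne
          exact ⟨a, b, hab, hne.1, hne.2⟩
        obtain ⟨a, b, hab, ha, hb⟩ := hji'
        have hay : a < y := lt_of_le_of_ne (hab ▸ le_sup_left) (fun h => ha h.symm)
        have hby : b < y := lt_of_le_of_ne (hab ▸ le_sup_right) (fun h => hb h.symm)
        have hia : ν a = 0 := IH a hay (le_trans hay.le hyx)
        have hib : ν b = 0 := IH b hby (le_trans hby.le hyx)
        have hic : ν (a ⊓ b) = 0 :=
          IH (a ⊓ b) (lt_of_le_of_lt inf_le_left hay)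
            (le_trans (le_trans inf_le_left hay.le) hyx)
        have := hval a b
        rw [← hab, hia, hib, hic] at this
        linarith
  exact key x le_rfl
end

section
/- Let A be a finite NM algebra and let ν : A → ℝ be its idempotent Euler characteristic. Then for every x ∈ A, ν(x) equals the number of minimal idempotent join-irreducible elements g ∈ A with g ≤ x, where an idempotent join-irreducible element g is minimal if there is no idempotent join-irreducible g' with g' < g. -/
/-!
Both `ν` and the count `μ x` of minimal idempotent join-irreducibles below `x` are valuations
vanishing at `⊥`: for `μ` because join-irreducibles of a distributive lattice are join-prime.
In a finite lattice every element other than `⊥` is join-irreducible or a join of two strictly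
smaller elements, so two such valuations agree as soon as they agree on join-irreducibles.
There the count is `1` or `0` according to whether `g` is idempotent: the idempotents below a
join-irreducible `g` form a chain (prelinearity), so at most one of them is minimal, and an
idempotent join-irreducible below `g` forces `g` itself to be idempotent (weak nilpotent minimum).
-/

open Finset NMAlgebra

section Lattice

variable {α : Type*}

theorem joinIrred_iff_supIrred [Lattice α] [OrderBot α] {g : α} :
    JoinIrred g ↔ SupIrred g := by
  refine and_congr (not_congr isMin_iff_eq_bot).symm ⟨fun h b c hbc => ?_, fun h b c hbc => ?_⟩
  · exact (h b c hbc.symm).imp Eq.symm Eq.symm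
  · exact (h hbc.symm).imp Eq.symm Eq.symm

theorem JoinIrred.supPrime [DistribLattice α] [OrderBot α] {g : α} (hg : JoinIrred g) :
    SupPrime g :=
  supPrime_iff_supIrred.mpr (joinIrred_iff_supIrred.mp hg)

theorem IsValuation.eq_of_eqOn_joinIrred [Lattice α] [OrderBot α] [WellFoundedLT α]
    {ν μ : α → ℝ} (hν : IsValuation ν) (hμ : IsValuation μ) (hbot : ν ⊥ = μ ⊥)
    (hji : ∀ g, JoinIrred g → ν g = μ g) (x : α) : ν x = μ x := by
  induction x using WellFoundedLT.induction with
  | _ x ih =>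
  by_cases hx : JoinIrred x
  · exact hji x hx
  rw [joinIrred_iff_supIrred, not_supIrred, isMin_iff_eq_bot] at hx
  obtain rfl | ⟨a, b, rfl, ha, hb⟩ := hx
  · exact hbot
  linarith [hν a b, hμ a b, ih a ha, ih b hb, ih (a ⊓ b) (inf_le_left.trans_lt ha)]

theorem isValuation_card_filter_le [Lattice α] [DecidableEq α] [DecidableLE α] {s : Finset α}
    (hs : ∀ g ∈ s, SupPrime g) : IsValuation fun x => (#{g ∈ s | g ≤ x} : ℝ) := by
  intro a b
  dsimp only
  have hsup : {g ∈ s | g ≤ a ⊔ b} = {g ∈ s | g ≤ a} ∪ {g ∈ s | g ≤ b} := by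
    rw [← filter_or]
    exact filter_congr fun g hg => (hs g hg).le_sup
  have hinf : {g ∈ s | g ≤ a ⊓ b} = {g ∈ s | g ≤ a} ∩ {g ∈ s | g ≤ b} := by
    rw [← filter_and]
    exact filter_congr fun g _ => le_inf_iff
  rw [hsup, hinf]
  exact_mod_cast (card_union_add_card_inter _ _).symm

end Lattice

namespace NMAlgebra

variable {A : Type*} [NMAlgebra A]

theorem odot_le_odot_right {x y : A} (h : x ≤ y) (z : A) : odot x z ≤ odot y z :=
  (residuation _ _ _).mpr (h.trans ((residuation _ _ _).mp le_rfl))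

theorem odot_le_odot_left {x y : A} (h : x ≤ y) (z : A) : odot z x ≤ odot z y := by
  rw [odot_comm z x, odot_comm z y]
  exact odot_le_odot_right h z

theorem odot_le_left_s5 (x y : A) : odot x y ≤ x :=
  (odot_le_odot_left le_top x).trans (odot_top x).le

theorem himp_odot_le (x y : A) : odot (himp x y) x ≤ y :=
  (residuation _ _ _).mpr le_rfl

theorem himp_le_himp_left {x x' : A} (h : x ≤ x') (y : A) : himp x' y ≤ himp x y :=
  (residuation _ _ _).mp ((odot_le_odot_left h _).trans (himp_odot_le x' y))

theorem le_odot_self_sup_neg (x : A) : x ≤ odot x x ⊔ neg x := by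
  suffices htop : ⊤ ≤ himp x (odot x x ⊔ neg x) by
    simpa only [odot_comm ⊤, odot_top] using (residuation _ _ _).mpr htop
  have hneg : himp (odot x x) ⊥ ≤ himp x (odot x x ⊔ neg x) := by
    refine (residuation _ _ _).mp (le_sup_of_le_right ((residuation _ _ _).mp ?_))
    rw [odot_assoc]
    exact himp_odot_le _ _
  have hle : himp x (odot x x) ≤ himp x (odot x x ⊔ neg x) :=
    (residuation _ _ _).mp ((himp_odot_le x _).trans le_sup_left)
  have hwnm := wnm x x
  rw [inf_idem] at hwnm
  exact hwnm ▸ sup_le hneg hle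

def IdemJoinIrred (g : A) : Prop := JoinIrred g ∧ odot g g = g

theorem minimal_idemJoinIrred_iff {g : A} :
    Minimal IdemJoinIrred g ↔ JoinIrred g ∧ odot g g = g ∧
      ¬∃ g' : A, JoinIrred g' ∧ odot g' g' = g' ∧ g' < g := by
  rw [minimal_iff_forall_lt, IdemJoinIrred, and_assoc]
  refine and_congr_right fun _ => and_congr_right fun _ => ?_
  simp only [not_exists, not_and]
  exact ⟨fun h y hy hidem hlt => h hlt ⟨hy, hidem⟩, fun h y hlt hy => h y hy.1 hy.2 hlt⟩

theorem JoinIrred.odot_self_of_idemJoinIrred_le {g e : A} (hg : JoinIrred g)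
    (he : IdemJoinIrred e) (heg : e ≤ g) : odot g g = g := by
  refine (hg.supPrime.le_sup.mp (le_odot_self_sup_neg g)).elim
    (fun h => (odot_le_left_s5 g g).antisymm h) fun h => absurd ?_ he.1.1
  -- `e ≤ g ≤ ¬g ≤ ¬e`, so `e = e ⊙ e ≤ e ⊙ ¬e = ⊥`
  have hneg : e ≤ neg e := heg.trans (h.trans (himp_le_himp_left heg ⊥))
  rw [← le_bot_iff, ← he.2]
  exact (odot_le_odot_right hneg e).trans (himp_odot_le e ⊥)

theorem JoinIrred.le_total_of_idem_le {g a b : A} (hg : JoinIrred g) (ha : odot a a = a)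
    (hb : odot b b = b) (hag : a ≤ g) (hbg : b ≤ g) : a ≤ b ∨ b ≤ a := by
  have hle : ∀ {c d : A}, odot c c = c → c ≤ g → g ≤ himp c d → c ≤ d := fun hc hcg h =>
    calc _ = odot _ _ := hc.symm
    _ ≤ _ := odot_le_odot_right (hcg.trans h) _
    _ ≤ _ := himp_odot_le _ _
  exact (hg.supPrime.le_sup.mp (prelinearity a b ▸ le_top)).imp (hle ha hag) (hle hb hbg)

theorem JoinIrred.card_filter_minimal_le [Fintype A] [DecidableEq A]
    [DecidablePred (Minimal (IdemJoinIrred (A := A)))] [DecidableLE A] {g : A}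
    (hg : JoinIrred g) :
    #{m | Minimal IdemJoinIrred m ∧ m ≤ g} = if odot g g = g then 1 else 0 := by
  split_ifs with hidem
  · obtain ⟨m, hmg, hm⟩ := exists_minimal_le_of_wellFoundedLT IdemJoinIrred g ⟨hg, hidem⟩
    refine card_eq_one.mpr ⟨m, eq_singleton_iff_unique_mem.mpr ⟨by simp [hm, hmg], ?_⟩⟩
    simp only [mem_filter, mem_univ, true_and, and_imp]
    intro m' hm' hm'g
    rcases hg.le_total_of_idem_le hm'.prop.2 hm.prop.2 hm'g hmg with h | h
    · exact hm.eq_of_le hm'.prop h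
    · exact (hm'.eq_of_le hm.prop h).symm
  · refine card_eq_zero.mpr (filter_eq_empty_iff.mpr fun m _ ⟨hm, hmg⟩ => ?_)
    exact hidem (hg.odot_self_of_idemJoinIrred_le hm.prop hmg)

end NMAlgebra

/-- χ⁺(x) equals the number of minimal idempotent join-irreducible
elements g with g ≤ x. -/
theorem stmt5 {A : Type*} [NMAlgebra A] [Fintype A] (ν : A → ℝ)
    (hν : IsIdemEuler ν) (x : A) :
    ν x = Nat.card {g : A // JoinIrred g ∧ NMAlgebra.odot g g = g ∧
      (¬ ∃ g' : A, JoinIrred g' ∧ NMAlgebra.odot g' g' = g' ∧ g' < g) ∧ g ≤ x} := by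
  classical
  obtain ⟨hval, hbot, hji⟩ := hν
  let s : Finset A := {m | Minimal IdemJoinIrred m}
  have hcount : ν x = #{g ∈ s | g ≤ x} := by
    refine hval.eq_of_eqOn_joinIrred (isValuation_card_filter_le fun g hg => ?_) ?_ ?_ x
    · exact (mem_filter.mp hg).2.prop.1.supPrime
    · rw [hbot, eq_comm, Nat.cast_eq_zero, card_eq_zero, filter_eq_empty_iff]
      exact fun g hg hle => (mem_filter.mp hg).2.prop.1.1 (le_bot_iff.mp hle)
    · intro g hg
      rw [filter_filter, hg.card_filter_minimal_le]
      by_cases hidem : odot g g = g <;> simp [hidem, hji g hg]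
  rw [hcount, Nat.card_eq_fintype_card, Fintype.card_subtype, filter_filter]
  simp only [minimal_idemJoinIrred_iff, and_assoc]
end

section
/- Let A be a finite NM algebra and let p be a maximal prime filter of A. Define the equivalence relation x ~ y iff (x→y)⊙(y→x) ∈ p. Then the quotient set A/~ has exactly 2 or exactly 3 equivalence classes (i.e., the quotient NM algebra A/p is isomorphic to the two-element NM chain or to the three-element NM chain). -/
namespace Stmt6Aux

open NMAlgebra

variable {A : Type*} [NMAlgebra A]

instance : CommMonoid A where
  mul := odot
  one := ⊤
  mul_assoc := odot_assoc
  mul_comm := odot_comm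
  mul_one := odot_top
  one_mul := fun x => (odot_comm ⊤ x).trans (odot_top x)

lemma mul_def (x y : A) : x * y = odot x y := rfl

lemma one_eq_top : (1 : A) = ⊤ := rfl

lemma resid' {x y z : A} : x * y ≤ z ↔ x ≤ himp y z := residuation x y z

lemma mul_le_mul_left'' {a b : A} (h : a ≤ b) (c : A) : c * a ≤ c * b := by
  rw [mul_comm c a, mul_comm c b]
  exact resid'.mpr (h.trans (resid'.mp (le_refl (b * c))))

lemma mul_le_mul'' {a b c d : A} (h1 : a ≤ b) (h2 : c ≤ d) : a * c ≤ b * d :=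
  le_trans (mul_le_mul_left'' h2 a) (by rw [mul_comm a d, mul_comm b d]; exact mul_le_mul_left'' h1 d)

lemma mul_le_mul_right'' {a b : A} (h : a ≤ b) (c : A) : a * c ≤ b * c := by
  rw [mul_comm a c, mul_comm b c]; exact mul_le_mul_left'' h c

lemma mul_le_left' (x y : A) : x * y ≤ x := by
  have := mul_le_mul_left'' (le_top.trans_eq one_eq_top.symm : y ≤ (1:A)) x
  rwa [mul_one] at this

lemma mul_le_right' (x y : A) : x * y ≤ y := by rw [mul_comm]; exact mul_le_left' y x

lemma mp' (x y : A) : himp x y * x ≤ y := resid'.mpr le_rfl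

lemma le_himp' (x y : A) : y ≤ himp x y := resid'.mp (mul_le_left' y x)

lemma himp_anti_left {x y : A} (z : A) (h : x ≤ y) : himp y z ≤ himp x z :=
  resid'.mp (le_trans (mul_le_mul_left'' h _) (mp' y z))

lemma neg_mul_self (x : A) : neg x * x ≤ ⊥ := mp' x ⊥

lemma neg_bot : neg (⊥ : A) = ⊤ :=
  le_antisymm le_top (resid'.mp (le_of_eq (one_mul ⊥)))

lemma neg_anti {x y : A} (h : x ≤ y) : neg y ≤ neg x := himp_anti_left ⊥ h

lemma contrap (x y : A) : himp x y ≤ himp (neg y) (neg x) := by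
  apply resid'.mp
  apply resid'.mp
  calc himp x y * neg y * x = neg y * (himp x y * x) := by
        rw [mul_comm (himp x y) (neg y), mul_assoc]
    _ ≤ neg y * y := mul_le_mul_left'' (mp' x y) _
    _ ≤ ⊥ := neg_mul_self y

lemma himp_mul (x y z : A) : himp (x * y) z = himp x (himp y z) := by
  apply le_antisymm
  · apply resid'.mp
    apply resid'.mp
    rw [mul_assoc]
    exact mp' _ _
  · apply resid'.mp
    rw [← mul_assoc]
    exact le_trans (by rw [mul_comm _ y, mul_comm _ y]; exact mul_le_mul_left'' (mp' x (himp y z)) y)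
      (mp' y z)

lemma himp_eq_neg_mul (x y : A) : himp x y = neg (x * neg y) := by
  show himp x y = himp (x * himp y ⊥) ⊥
  rw [himp_mul, involution]

lemma pow_succ_le (x : A) (n : ℕ) : x ^ (n + 1) ≤ x ^ n := by
  rw [pow_succ]
  have := mul_le_mul_left'' (le_top.trans_eq one_eq_top.symm : x ≤ (1:A)) (x ^ n)
  rwa [mul_one] at this

lemma pow_anti (x : A) : ∀ {m n : ℕ}, n ≤ m → x ^ m ≤ x ^ n := by
  intro m
  induction m with
  | zero => intro n h; rw [Nat.le_zero.mp h]
  | succ m ih =>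
    intro n h
    rcases Nat.eq_or_lt_of_le h with rfl | h'
    · exact le_rfl
    · exact (pow_succ_le x m).trans (ih (Nat.lt_succ_iff.mp h'))

lemma exists_idem_pow [Fintype A] (x : A) : ∃ k : ℕ, 1 ≤ k ∧ ∀ j : ℕ, x ^ (k + j) = x ^ k := by
  obtain ⟨a, b, hab, heq⟩ := Finite.exists_ne_map_eq_of_infinite (fun n : ℕ => x ^ n)
  wlog hlt : a < b generalizing a b
  · exact this b a hab.symm heq.symm ((hab.lt_or_gt).resolve_left hlt)
  have hstep : x ^ (a + 1) = x ^ a := by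
    refine le_antisymm (pow_anti x (Nat.le_succ a)) ?_
    calc x ^ a = x ^ b := heq
      _ ≤ x ^ (a + 1) := pow_anti x hlt
  refine ⟨a + 1, Nat.le_add_left 1 a, ?_⟩
  intro j
  induction j with
  | zero => rfl
  | succ j ih =>
    have : a + 1 + (j + 1) = (a + 1 + j) + 1 := by omega
    rw [this, pow_succ, ih, ← pow_succ]
    show x ^ (a + 1 + 1) = x ^ (a + 1)
    rw [pow_succ, hstep, ← pow_succ, hstep]

lemma himp_pow_chain (x : A) : ∀ n : ℕ, (himp x (x * x)) ^ n ≤ himp x (x ^ (n + 1)) := by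
  intro n
  induction n with
  | zero => rw [pow_zero, pow_one]; exact resid'.mp (le_of_eq (one_mul x))
  | succ n ih =>
    apply resid'.mp
    calc (himp x (x*x)) ^ (n+1) * x = (himp x (x*x)) ^ n * (himp x (x*x) * x) := by
          rw [pow_succ, mul_assoc]
      _ ≤ (himp x (x*x)) ^ n * (x * x) := mul_le_mul_left'' (mp' x (x*x)) _
      _ = ((himp x (x*x)) ^ n * x) * x := by rw [mul_assoc]
      _ ≤ x ^ (n+1) * x := mul_le_mul_right'' (resid'.mpr ih) x
      _ = x ^ (n + 1 + 1) := (pow_succ x (n+1)).symm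

section Filter

variable {p : Set A} (hp : IsMaximalPrimeFilter p)

include hp

lemma top_mem : ⊤ ∈ p := by
  obtain ⟨a, ha⟩ := hp.1.1.1
  exact hp.1.1.2.1 a ⊤ ha le_top

lemma bot_not_mem : ⊥ ∉ p := fun h =>
  hp.1.2.1 (Set.eq_univ_of_forall fun x => hp.1.1.2.1 ⊥ x h bot_le)

lemma mem_up {x y : A} (hx : x ∈ p) (h : x ≤ y) : y ∈ p := hp.1.1.2.1 x y hx h

lemma mem_mul {x y : A} (hx : x ∈ p) (hy : y ∈ p) : x * y ∈ p := hp.1.1.2.2 x y hx hy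

lemma mem_pow {x : A} (hx : x ∈ p) : ∀ n : ℕ, x ^ n ∈ p := by
  intro n
  induction n with
  | zero => rw [pow_zero]; exact top_mem hp
  | succ n ih => rw [pow_succ]; exact mem_mul hp ih hx

lemma not_mem_neg {x : A} (hx : x ∈ p) : neg x ∉ p := fun h => by
  have : x * neg x ∈ p := mem_mul hp hx h
  have hb : ⊥ ∈ p := mem_up hp this (by rw [mul_comm]; exact neg_mul_self x)
  exact bot_not_mem hp hb

lemma neg_idem_mem {e : A} (he : e * e = e) (hene : e ∉ p) : neg e ∈ p := by
  set T : Set A := {w : A | ∃ a ∈ p, a * e ≤ w} with hT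
  have hTfil : IsFilter T := by
    refine ⟨⟨⊤, ⊤, top_mem hp, le_top⟩, ?_, ?_⟩
    · rintro x y ⟨a, ha, hax⟩ hxy
      exact ⟨a, ha, hax.trans hxy⟩
    · rintro x y ⟨a, ha, hax⟩ ⟨b, hb, hby⟩
      refine ⟨a * b, mem_mul hp ha hb, ?_⟩
      calc a * b * e = a * b * (e * e) := by rw [he]
        _ = (a * e) * (b * e) := by rw [mul_mul_mul_comm]
        _ ≤ x * y := mul_le_mul'' hax hby
  by_cases hTu : T = Set.univ
  · have hbT : (⊥ : A) ∈ T := hTu ▸ Set.mem_univ ⊥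
    obtain ⟨a, ha, hae⟩ := hbT
    exact mem_up hp ha (resid'.mp hae)
  · have heq : T = p := hp.2 T hTfil hTu (fun w hw => ⟨w, hw, mul_le_left' w e⟩)
    have heT : e ∈ T := ⟨⊤, top_mem hp, le_of_eq (one_mul e)⟩
    exact absurd (heq ▸ heT) hene

lemma neg_sq_mem [Fintype A] {z : A} (hz : z ∉ p) (hnz : neg z ∉ p) : neg (z * z) ∈ p := by
  have hw : himp (odot z z) ⊥ ⊔ himp (z ⊓ z) (odot z z) = ⊤ := wnm z z
  rw [inf_idem] at hw
  have hwp : himp (odot z z) ⊥ ⊔ himp z (odot z z) ∈ p := hw ▸ top_mem hp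
  rcases hp.1.2.2 _ _ hwp with h | h
  · exact h
  · exfalso
    obtain ⟨k, hk1, hst⟩ := exists_idem_pow z
    set e := z ^ k with hedef
    have hee : e * e = e := by
      rw [hedef, ← pow_add]
      exact hst k
    have hchain : (himp z (z * z)) ^ (k - 1) ≤ himp z e := by
      have := himp_pow_chain z (k - 1)
      rwa [Nat.sub_add_cancel hk1] at this
    have h1 : himp z e ∈ p := mem_up hp (mem_pow hp h (k - 1)) hchain
    have hene : e ∉ p := fun hmem => hz (mem_up hp hmem (by
      calc e = z ^ k := rfl
        _ ≤ z ^ 1 := pow_anti z hk1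
        _ = z := pow_one z))
    have hnege : neg e ∈ p := neg_idem_mem hp hee hene
    have h2 : himp (neg e) (neg z) ∈ p := mem_up hp h1 (contrap z e)
    have h3 : neg z ∈ p := mem_up hp (mem_mul hp h2 hnege) (mp' (neg e) (neg z))
    exact hnz h3

lemma himp_mem_of_mid [Fintype A] {x y : A} (hx : x ∉ p) (hnx : neg x ∉ p)
    (hy : y ∉ p) (hny : neg y ∉ p) : himp x y ∈ p := by
  have hs : x ⊔ neg y ∉ p := fun h => (hp.1.2.2 _ _ h).elim hx hny
  have hns : neg (x ⊔ neg y) ∉ p := fun h => hnx (mem_up hp h (neg_anti le_sup_left))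
  have h2 : neg ((x ⊔ neg y) * (x ⊔ neg y)) ∈ p := neg_sq_mem hp hs hns
  have h3 : x * neg y ≤ (x ⊔ neg y) * (x ⊔ neg y) := mul_le_mul'' le_sup_left le_sup_right
  have h4 : neg (x * neg y) ∈ p := mem_up hp h2 (neg_anti h3)
  rw [← himp_eq_neg_mul] at h4
  exact h4

/-- The quotienting relation. -/
def R (p : Set A) (x y : A) : Prop := odot (himp x y) (himp y x) ∈ p

omit hp in
lemma r_symm {x y : A} (h : R p x y) : R p y x := by
  unfold R at h ⊢
  rwa [odot_comm] at h

omit hp in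
lemma r_def {x y : A} : R p x y ↔ himp x y * himp y x ∈ p := Iff.rfl

lemma r_of_both_mem {x y : A} (hx : x ∈ p) (hy : y ∈ p) : R p x y :=
  mem_mul hp (mem_up hp hy (le_himp' x y)) (mem_up hp hx (le_himp' y x))

lemma r_of_both_neg {x y : A} (hx : neg x ∈ p) (hy : neg y ∈ p) : R p x y := by
  refine mem_mul hp (mem_up hp hx ?_) (mem_up hp hy ?_)
  · exact resid'.mp ((neg_mul_self x).trans bot_le)
  · exact resid'.mp ((neg_mul_self y).trans bot_le)

lemma r_of_both_mid [Fintype A] {x y : A} (hx : x ∉ p) (hnx : neg x ∉ p)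
    (hy : y ∉ p) (hny : neg y ∉ p) : R p x y :=
  mem_mul hp (himp_mem_of_mid hp hx hnx hy hny) (himp_mem_of_mid hp hy hny hx hnx)

lemma mem_of_r {x y : A} (h : R p x y) (hx : x ∈ p) : y ∈ p := by
  have h1 : himp x y ∈ p := mem_up hp h (mul_le_left' _ _)
  exact mem_up hp (mem_mul hp h1 hx) (mp' x y)

lemma neg_mem_of_r {x y : A} (h : R p x y) (hnx : neg x ∈ p) : neg y ∈ p := by
  have h1 : himp y x ∈ p := mem_up hp h (mul_le_right' _ _)
  have h2 : himp (neg x) (neg y) ∈ p := mem_up hp h1 (contrap y x)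
  exact mem_up hp (mem_mul hp h2 hnx) (mp' (neg x) (neg y))

end Filter

open Filter in
theorem main [Fintype A] {p : Set A} (hp : IsMaximalPrimeFilter p) :
    Nat.card (Quot (R p)) = 2 ∨ Nat.card (Quot (R p)) = 3 := by
  classical
  have hbot : (⊥ : A) ∉ p := bot_not_mem hp
  have hnbot : neg (⊥ : A) ∈ p := by rw [neg_bot]; exact top_mem hp
  have htop : (⊤ : A) ∈ p := top_mem hp
  by_cases hM : ∃ m : A, m ∉ p ∧ neg m ∉ p
  · obtain ⟨m₀, hm, hnm⟩ := hM
    right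
    set c : A → Fin 3 := fun x => if x ∈ p then 2 else if neg x ∈ p then 0 else 1 with hc
    have hresp : ∀ x y : A, R p x y → c x = c y := by
      intro x y hxy
      by_cases hx : x ∈ p
      · have hy := mem_of_r hp hxy hx
        simp [hc, hx, hy]
      · have hy : y ∉ p := fun hy => hx (mem_of_r hp (r_symm hxy) hy)
        by_cases hnx : neg x ∈ p
        · have hny := neg_mem_of_r hp hxy hnx
          simp [hc, hx, hy, hnx, hny]
        · have hny : neg y ∉ p := fun h => hnx (neg_mem_of_r hp (r_symm hxy) h)
          simp [hc, hx, hy, hnx, hny]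
    let g : Fin 3 → Quot (R p) := ![Quot.mk _ ⊥, Quot.mk _ m₀, Quot.mk _ ⊤]
    have e3 : Quot (R p) ≃ Fin 3 :=
      { toFun := Quot.lift c hresp
        invFun := g
        left_inv := by
          apply Quot.ind
          intro x
          show g (c x) = Quot.mk _ x
          by_cases hx : x ∈ p
          · have hcx : c x = 2 := by simp [hc, hx]
            rw [hcx]
            exact Quot.sound (r_of_both_mem hp htop hx)
          · by_cases hnx : neg x ∈ p
            · have hcx : c x = 0 := by simp [hc, hx, hnx]
              rw [hcx]
              exact Quot.sound (r_of_both_neg hp hnbot hnx)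
            · have hcx : c x = 1 := by simp [hc, hx, hnx]
              rw [hcx]
              exact Quot.sound (r_of_both_mid hp hm hnm hx hnx)
        right_inv := by
          intro i
          fin_cases i
          · show c ⊥ = 0
            simp [hc, hbot, hnbot]
          · show c m₀ = 1
            simp [hc, hm, hnm]
          · show c ⊤ = 2
            simp [hc, htop] }
    rw [Nat.card_congr e3, Nat.card_eq_fintype_card, Fintype.card_fin]
  · push_neg at hM
    left
    set c : A → Fin 2 := fun x => if x ∈ p then 1 else 0 with hc
    have hresp : ∀ x y : A, R p x y → c x = c y := by
      intro x y hxy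
      by_cases hx : x ∈ p
      · have hy := mem_of_r hp hxy hx
        simp [hc, hx, hy]
      · have hy : y ∉ p := fun hy => hx (mem_of_r hp (r_symm hxy) hy)
        simp [hc, hx, hy]
    let g : Fin 2 → Quot (R p) := ![Quot.mk _ ⊥, Quot.mk _ ⊤]
    have e2 : Quot (R p) ≃ Fin 2 :=
      { toFun := Quot.lift c hresp
        invFun := g
        left_inv := by
          apply Quot.ind
          intro x
          show g (c x) = Quot.mk _ x
          by_cases hx : x ∈ p
          · have hcx : c x = 1 := by simp [hc, hx]
            rw [hcx]
            exact Quot.sound (r_of_both_mem hp htop hx)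
          · have hcx : c x = 0 := by simp [hc, hx]
            rw [hcx]
            exact Quot.sound (r_of_both_neg hp hnbot (hM x hx))
        right_inv := by
          intro i
          fin_cases i
          · show c ⊥ = 0
            simp [hc, hbot]
          · show c ⊤ = 1
            simp [hc, htop] }
    rw [Nat.card_congr e2, Nat.card_eq_fintype_card, Fintype.card_fin]

end Stmt6Aux

/-- the quotient of a finite NM algebra by a maximal prime filter
has exactly 2 or exactly 3 classes. -/
theorem stmt6 {A : Type*} [NMAlgebra A] [Fintype A] (p : Set A)
    (hp : NMAlgebra.IsMaximalPrimeFilter p) :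
    Nat.card (Quot (fun x y : A =>
        NMAlgebra.odot (NMAlgebra.himp x y) (NMAlgebra.himp y x) ∈ p)) = 2 ∨
    Nat.card (Quot (fun x y : A =>
        NMAlgebra.odot (NMAlgebra.himp x y) (NMAlgebra.himp y x) ∈ p)) = 3 :=
  Stmt6Aux.main (p := p) hp
end

section
/- Let A be a finite NM algebra and let S be a prime filter of A. Then the minimum element m of S satisfies m⊙m = m and m is join-irreducible. -/
/-- the minimum element of a prime filter of a finite NM algebra
is idempotent and join-irreducible. -/
theorem stmt9 {A : Type*} [NMAlgebra A] [Fintype A] (S : Set A)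
    (hS : NMAlgebra.IsPrimeFilter S) (m : A) (hm : m ∈ S) (hmin : ∀ y ∈ S, m ≤ y) :
    NMAlgebra.odot m m = m ∧ JoinIrred m := by
  obtain ⟨⟨hne, hup, hmul⟩, hproper, hprime⟩ := hS
  have hle : NMAlgebra.odot m m ≤ m := by
    rw [NMAlgebra.residuation]
    have : (⊤ : A) ≤ NMAlgebra.himp m m := by
      rw [← NMAlgebra.residuation, NMAlgebra.odot_comm, NMAlgebra.odot_top]
    exact le_trans le_top this
  have hidem : NMAlgebra.odot m m = m :=
    le_antisymm hle (hmin _ (hmul m m hm hm))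
  have hbot : (⊥ : A) ∉ S := by
    intro h
    exact hproper (Set.eq_univ_of_forall fun x => hup ⊥ x h bot_le)
  refine ⟨hidem, ?_, ?_⟩
  · intro h; exact hbot (h ▸ hm)
  · intro y z hyz
    rcases hprime y z (hyz ▸ hm) with h | h
    · exact Or.inl (le_antisymm (hmin y h) (hyz ▸ le_sup_left))
    · exact Or.inr (le_antisymm (hmin z h) (hyz ▸ le_sup_right))
end

section
/- Let A be a finite NM algebra. The map sending an NM homomorphism h : A → 𝟯 to h⁻¹({1}) is a bijection between the set of NM homomorphisms from A to the three-element NM chain 𝟯 and the set of maximal prime filters of A. -/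
namespace NMLem
open NMAlgebra

variable {α : Type*} [NMAlgebra α]

lemma res {x y z : α} : odot x y ≤ z ↔ x ≤ himp y z := residuation x y z

lemma top_odot (x : α) : odot ⊤ x = x := by rw [odot_comm]; exact odot_top x

instance : Std.Associative (odot (α := α)) := ⟨odot_assoc⟩
instance : Std.Commutative (odot (α := α)) := ⟨odot_comm⟩

lemma odot_mono {x x' y y' : α} (h1 : x ≤ x') (h2 : y ≤ y') :
    odot x y ≤ odot x' y' := by
  have a : odot x y ≤ odot x' y := res.mpr (h1.trans (res.mp le_rfl))
  have b : odot y x' ≤ odot y' x' := res.mpr (h2.trans (res.mp le_rfl))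
  calc odot x y ≤ odot x' y := a
    _ = odot y x' := odot_comm _ _
    _ ≤ odot y' x' := b
    _ = odot x' y' := odot_comm _ _

lemma odot_le_left (x y : α) : odot x y ≤ x :=
  le_of_le_of_eq (odot_mono le_rfl le_top) (odot_top x)

lemma odot_le_right (x y : α) : odot x y ≤ y := by
  rw [odot_comm]; exact odot_le_left y x

lemma himp_odot_le (x y : α) : odot (himp x y) x ≤ y := res.mpr le_rfl

lemma odot_himp_le (x y : α) : odot x (himp x y) ≤ y := by
  rw [odot_comm]; exact himp_odot_le x y

lemma le_himp_self (x y : α) : y ≤ himp x y := res.mp (odot_le_left y x)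

lemma neg_def (x : α) : neg x = himp x ⊥ := rfl

lemma odot_neg (x : α) : odot x (neg x) = ⊥ :=
  le_antisymm (odot_himp_le x ⊥) bot_le

lemma neg_odot_self (x : α) : odot (neg x) x = ⊥ := by
  rw [odot_comm]; exact odot_neg x

lemma nneg_neg (x : α) : neg (neg x) = x := involution x

lemma neg_anti {x y : α} (h : x ≤ y) : neg y ≤ neg x := by
  rw [neg_def]
  refine res.mp ?_
  calc odot (neg y) x ≤ odot (neg y) y := odot_mono le_rfl h
    _ = odot y (neg y) := odot_comm _ _
    _ = ⊥ := odot_neg y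

lemma le_neg_odot_iff {s x y : α} : s ≤ neg (odot x (neg y)) ↔ odot s x ≤ y := by
  rw [neg_def, ← res]
  constructor
  · intro h
    have h2 : odot (odot s x) (neg y) ≤ ⊥ := by rwa [odot_assoc]
    have h3 := res.mp h2
    rwa [← neg_def, nneg_neg] at h3
  · intro h
    rw [← odot_assoc]
    calc odot (odot s x) (neg y) ≤ odot y (neg y) := odot_mono h le_rfl
      _ = ⊥ := odot_neg y

lemma himp_eq_neg_odot (x y : α) : himp x y = neg (odot x (neg y)) :=
  le_antisymm (le_neg_odot_iff.mpr (himp_odot_le x y)) (res.mp (le_neg_odot_iff.mp le_rfl))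

lemma neg_odot_eq (x y : α) : neg (odot x y) = himp x (neg y) := by
  rw [himp_eq_neg_odot x (neg y), nneg_neg]

lemma himp_contrapose (x y : α) : himp x y = himp (neg y) (neg x) := by
  rw [himp_eq_neg_odot, himp_eq_neg_odot (neg y), nneg_neg, odot_comm]

lemma odot_sup (a x y : α) : odot a (x ⊔ y) = odot a x ⊔ odot a y := by
  apply le_antisymm
  · rw [odot_comm]
    refine res.mpr (sup_le (res.mp ?_) (res.mp ?_))
    · rw [odot_comm]; exact le_sup_left
    · rw [odot_comm]; exact le_sup_right
  · exact sup_le (odot_mono le_rfl le_sup_left) (odot_mono le_rfl le_sup_right)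

lemma neg_sup (x y : α) : neg (x ⊔ y) = neg x ⊓ neg y := by
  apply le_antisymm
  · exact le_inf (neg_anti le_sup_left) (neg_anti le_sup_right)
  · rw [neg_def]
    refine res.mp ?_
    rw [odot_sup]
    refine sup_le ?_ ?_
    · calc odot (neg x ⊓ neg y) x ≤ odot (neg x) x := odot_mono inf_le_left le_rfl
        _ ≤ ⊥ := le_of_eq (neg_odot_self x)
    · calc odot (neg x ⊓ neg y) y ≤ odot (neg y) y := odot_mono inf_le_right le_rfl
        _ ≤ ⊥ := le_of_eq (neg_odot_self y)

lemma neg_inf (x y : α) : neg (x ⊓ y) = neg x ⊔ neg y := by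
  have h := neg_sup (neg x) (neg y)
  rw [nneg_neg, nneg_neg] at h
  rw [← h, nneg_neg]

lemma neg_bot : neg (⊥ : α) = ⊤ := by
  apply le_antisymm le_top
  rw [neg_def, ← res]
  exact le_of_eq_of_le (top_odot ⊥) le_rfl

lemma himp_trans (x y z : α) : odot (himp x y) (himp y z) ≤ himp x z := by
  refine res.mp ?_
  calc odot (odot (himp x y) (himp y z)) x
      = odot (odot (himp x y) x) (himp y z) := by ac_rfl
    _ ≤ odot y (himp y z) := odot_mono (himp_odot_le x y) le_rfl
    _ ≤ z := odot_himp_le y z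

lemma cube_eq_sq (x : α) : odot (odot x x) x = odot x x := by
  apply le_antisymm
  · exact le_of_le_of_eq (odot_mono le_rfl le_top) (odot_top _)
  · have hw := wnm x x
    rw [inf_idem] at hw
    have h1 : odot x x = odot (odot x x) (himp x (odot x x)) := by
      conv_lhs => rw [← odot_top (odot x x), ← hw]
      rw [odot_sup]
      have hb : odot (odot x x) (himp (odot x x) ⊥) = ⊥ := odot_neg (odot x x)
      rw [hb, bot_sup_eq]
    calc odot x x = odot (odot x x) (himp x (odot x x)) := h1
      _ = odot x (odot x (himp x (odot x x))) := odot_assoc _ _ _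
      _ ≤ odot x (odot x x) := odot_mono le_rfl (odot_himp_le x _)
      _ = odot (odot x x) x := odot_comm _ _

lemma sq_sq (x : α) : odot (odot x x) (odot x x) = odot x x := by
  rw [← odot_assoc, cube_eq_sq, cube_eq_sq]

end NMLem

namespace NMLem
open NMAlgebra

variable {α : Type*} [NMAlgebra α] {S : Set α}

lemma upper (hS : IsMaximalPrimeFilter S) {x y : α} (hx : x ∈ S) (h : x ≤ y) : y ∈ S :=
  hS.1.1.2.1 x y hx h

lemma odot_mem (hS : IsMaximalPrimeFilter S) {x y : α} (hx : x ∈ S) (hy : y ∈ S) :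
    odot x y ∈ S := hS.1.1.2.2 x y hx hy

lemma top_mem (hS : IsMaximalPrimeFilter S) : ⊤ ∈ S := by
  obtain ⟨x, hx⟩ := hS.1.1.1
  exact upper hS hx le_top

lemma bot_not_mem (hS : IsMaximalPrimeFilter S) : ⊥ ∉ S := fun h =>
  hS.1.2.1 (Set.eq_univ_of_forall fun y => upper hS h bot_le)

lemma not_both (hS : IsMaximalPrimeFilter S) {x : α} (hx : x ∈ S) (hnx : neg x ∈ S) : False :=
  bot_not_mem hS (odot_neg x ▸ odot_mem hS hx hnx)

lemma mp_mem (hS : IsMaximalPrimeFilter S) {x y : α} (hx : x ∈ S) (hxy : himp x y ∈ S) :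
    y ∈ S := upper hS (odot_mem hS hx hxy) (odot_himp_le x y)

lemma prime (hS : IsMaximalPrimeFilter S) {x y : α} (h : x ⊔ y ∈ S) : x ∈ S ∨ y ∈ S :=
  hS.1.2.2 x y h

lemma linear (hS : IsMaximalPrimeFilter S) (x y : α) : himp x y ∈ S ∨ himp y x ∈ S :=
  prime hS (by rw [prelinearity]; exact top_mem hS)

lemma inf_mem (hS : IsMaximalPrimeFilter S) {x y : α} (hx : x ∈ S) (hy : y ∈ S) :
    x ⊓ y ∈ S :=
  upper hS (odot_mem hS hx hy) (le_inf (odot_le_left x y) (odot_le_right x y))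

lemma himp_mem_trans (hS : IsMaximalPrimeFilter S) {x y z : α}
    (h1 : himp x y ∈ S) (h2 : himp y z ∈ S) : himp x z ∈ S :=
  upper hS (odot_mem hS h1 h2) (himp_trans x y z)

lemma maximal_neg_sq (hS : IsMaximalPrimeFilter S) {x : α} (hx : x ∉ S) :
    neg (odot x x) ∈ S := by
  set G : Set α := {y | ∃ s ∈ S, odot s (odot x x) ≤ y} with hGdef
  have hG : IsFilter G := by
    refine ⟨⟨⊤, ⊤, top_mem hS, le_top⟩, ?_, ?_⟩
    · rintro a b ⟨s, hs, hsa⟩ hab; exact ⟨s, hs, hsa.trans hab⟩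
    · rintro a b ⟨s, hs, hsa⟩ ⟨t, ht, htb⟩
      refine ⟨odot s t, odot_mem hS hs ht, ?_⟩
      calc odot (odot s t) (odot x x)
          = odot (odot s t) (odot (odot x x) (odot x x)) := by rw [sq_sq]
        _ = odot (odot s (odot x x)) (odot t (odot x x)) := by ac_rfl
        _ ≤ odot a b := odot_mono hsa htb
  have hsub : S ⊆ G := fun s hs => ⟨s, hs, odot_le_left s _⟩
  have hxG : x ∈ G := ⟨⊤, top_mem hS, by rw [top_odot]; exact odot_le_left x x⟩
  have huniv : G = Set.univ := by
    by_contra hne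
    exact hx ((hS.2 G hG hne hsub) ▸ hxG)
  have hbot : ⊥ ∈ G := huniv ▸ Set.mem_univ ⊥
  obtain ⟨s, hs, hsb⟩ := hbot
  exact upper hS hs (neg_def (odot x x) ▸ res.mp hsb)

lemma middle_self₁ (hS : IsMaximalPrimeFilter S) {x : α} (hx : x ∉ S) :
    himp x (neg x) ∈ S := by
  have h := maximal_neg_sq hS hx
  rwa [neg_odot_eq] at h

lemma middle_self₂ (hS : IsMaximalPrimeFilter S) {x : α} (hx : neg x ∉ S) :
    himp (neg x) x ∈ S := by
  have h := maximal_neg_sq hS hx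
  rwa [neg_odot_eq, nneg_neg] at h

lemma middle_himp (hS : IsMaximalPrimeFilter S) {x y : α}
    (hx : x ∉ S) (hnx : neg x ∉ S) (hy : y ∉ S) (hny : neg y ∉ S) : himp x y ∈ S := by
  rcases linear hS x y with h | h
  · exact h
  · rw [himp_contrapose y x] at h
    exact himp_mem_trans hS (himp_mem_trans hS (middle_self₁ hS hx) h) (middle_self₂ hS hny)

open Classical in
noncomputable def hmap (S : Set α) (x : α) : Fin 3 :=
  if x ∈ S then 2 else if NMAlgebra.neg x ∈ S then 0 else 1

lemma hmap_of_mem {x : α} (hx : x ∈ S) : hmap S x = 2 := by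
  unfold hmap; rw [if_pos hx]

lemma hmap_of_neg_mem (hS : IsMaximalPrimeFilter S) {x : α} (hnx : neg x ∈ S) :
    hmap S x = 0 := by
  unfold hmap
  rw [if_neg (fun h => not_both hS h hnx), if_pos hnx]

lemma hmap_of_middle {x : α} (hx : x ∉ S) (hnx : neg x ∉ S) : hmap S x = 1 := by
  unfold hmap; rw [if_neg hx, if_neg hnx]

lemma trichotomy (hS : IsMaximalPrimeFilter S) (x : α) :
    (x ∈ S ∧ neg x ∉ S ∧ hmap S x = 2) ∨ (x ∉ S ∧ neg x ∈ S ∧ hmap S x = 0) ∨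
      (x ∉ S ∧ neg x ∉ S ∧ hmap S x = 1) := by
  by_cases hx : x ∈ S
  · exact Or.inl ⟨hx, fun h => not_both hS hx h, hmap_of_mem hx⟩
  · by_cases hnx : neg x ∈ S
    · exact Or.inr (Or.inl ⟨hx, hnx, hmap_of_neg_mem hS hnx⟩)
    · exact Or.inr (Or.inr ⟨hx, hnx, hmap_of_middle hx hnx⟩)

end NMLem

namespace NMLem
open NMAlgebra

variable {α : Type*} [NMAlgebra α] {S : Set α}

lemma hmap_inf (hS : IsMaximalPrimeFilter S) (x y : α) :
    hmap S (x ⊓ y) = min (hmap S x) (hmap S y) := by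
  have negL : neg x ∈ S → hmap S (x ⊓ y) = 0 := fun h =>
    hmap_of_neg_mem hS (upper hS h (by rw [neg_inf]; exact le_sup_left))
  have negR : neg y ∈ S → hmap S (x ⊓ y) = 0 := fun h =>
    hmap_of_neg_mem hS (upper hS h (by rw [neg_inf]; exact le_sup_right))
  have mid : x ∉ S ∨ y ∉ S → neg x ∉ S → neg y ∉ S → hmap S (x ⊓ y) = 1 := by
    intro h hnx hny
    refine hmap_of_middle ?_ ?_
    · rcases h with h | h
      · exact fun H => h (upper hS H inf_le_left)
      · exact fun H => h (upper hS H inf_le_right)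
    · intro H
      rw [neg_inf] at H
      rcases prime hS H with H | H
      · exact hnx H
      · exact hny H
  rcases trichotomy hS x with ⟨hx, hnx, ex⟩ | ⟨hx, hnx, ex⟩ | ⟨hx, hnx, ex⟩ <;>
    rcases trichotomy hS y with ⟨hy, hny, ey⟩ | ⟨hy, hny, ey⟩ | ⟨hy, hny, ey⟩ <;>
    rw [ex, ey]
  · rw [hmap_of_mem (inf_mem hS hx hy)]; decide
  · rw [negR hny]; decide
  · rw [mid (Or.inr hy) hnx hny]; decide
  · rw [negL hnx]; decide
  · rw [negL hnx]; decide
  · rw [negL hnx]; decide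
  · rw [mid (Or.inl hx) hnx hny]; decide
  · rw [negR hny]; decide
  · rw [mid (Or.inl hx) hnx hny]; decide

lemma hmap_sup (hS : IsMaximalPrimeFilter S) (x y : α) :
    hmap S (x ⊔ y) = max (hmap S x) (hmap S y) := by
  have memL : x ∈ S → hmap S (x ⊔ y) = 2 := fun h => hmap_of_mem (upper hS h le_sup_left)
  have memR : y ∈ S → hmap S (x ⊔ y) = 2 := fun h => hmap_of_mem (upper hS h le_sup_right)
  have mid : x ∉ S → y ∉ S → neg x ∉ S ∨ neg y ∉ S → hmap S (x ⊔ y) = 1 := by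
    intro hx hy h
    refine hmap_of_middle ?_ ?_
    · intro H; rcases prime hS H with H | H
      · exact hx H
      · exact hy H
    · intro H
      rw [neg_sup] at H
      rcases h with h | h
      · exact h (upper hS H inf_le_left)
      · exact h (upper hS H inf_le_right)
  rcases trichotomy hS x with ⟨hx, hnx, ex⟩ | ⟨hx, hnx, ex⟩ | ⟨hx, hnx, ex⟩ <;>
    rcases trichotomy hS y with ⟨hy, hny, ey⟩ | ⟨hy, hny, ey⟩ | ⟨hy, hny, ey⟩ <;>
    rw [ex, ey]
  · rw [memL hx]; decide
  · rw [memL hx]; decide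
  · rw [memL hx]; decide
  · rw [memR hy]; decide
  · rw [hmap_of_neg_mem hS (by rw [neg_sup]; exact inf_mem hS hnx hny)]; decide
  · rw [mid hx hy (Or.inr hny)]; decide
  · rw [memR hy]; decide
  · rw [mid hx hy (Or.inl hnx)]; decide
  · rw [mid hx hy (Or.inl hnx)]; decide

lemma hmap_odot (hS : IsMaximalPrimeFilter S) (x y : α) :
    hmap S (odot x y) = odot3 (hmap S x) (hmap S y) := by
  have negR : ∀ a b : α, neg b ∈ S → hmap S (odot a b) = 0 := fun a b h =>
    hmap_of_neg_mem hS (upper hS h (by rw [neg_odot_eq]; exact le_himp_self a (neg b)))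
  have negL : ∀ a b : α, neg a ∈ S → hmap S (odot a b) = 0 := fun a b h => by
    rw [odot_comm]; exact negR b a h
  -- (mem, middle) case: value 1
  have memMid : ∀ a b : α, a ∈ S → b ∉ S → neg b ∉ S → hmap S (odot a b) = 1 := by
    intro a b ha hb hnb
    refine hmap_of_middle (fun H => hb (upper hS H (odot_le_right a b))) ?_
    intro H
    rw [neg_odot_eq] at H
    exact hnb (mp_mem hS ha H)
  rcases trichotomy hS x with ⟨hx, hnx, ex⟩ | ⟨hx, hnx, ex⟩ | ⟨hx, hnx, ex⟩ <;>
    rcases trichotomy hS y with ⟨hy, hny, ey⟩ | ⟨hy, hny, ey⟩ | ⟨hy, hny, ey⟩ <;>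
    rw [ex, ey]
  · rw [hmap_of_mem (odot_mem hS hx hy)]; decide
  · rw [negR x y hny]; decide
  · rw [memMid x y hx hy hny]; decide
  · rw [negL x y hnx]; decide
  · rw [negL x y hnx]; decide
  · rw [negL x y hnx]; decide
  · rw [odot_comm, memMid y x hy hx hnx]; decide
  · rw [negR x y hny]; decide
  · -- both middle
    have : neg (odot x y) ∈ S := by
      rw [neg_odot_eq]
      exact middle_himp hS hx hnx hny (by rw [nneg_neg]; exact hy)
    rw [hmap_of_neg_mem hS this]; decide

lemma hmap_neg (hS : IsMaximalPrimeFilter S) (x : α) :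
    hmap S (neg x) = neg3 (hmap S x) := by
  rcases trichotomy hS x with ⟨hx, hnx, ex⟩ | ⟨hx, hnx, ex⟩ | ⟨hx, hnx, ex⟩ <;> rw [ex]
  · rw [hmap_of_neg_mem hS (by rw [nneg_neg]; exact hx)]; decide
  · rw [hmap_of_mem hnx]; decide
  · rw [hmap_of_middle hnx (by rw [nneg_neg]; exact hx)]; decide

lemma hmap_himp (hS : IsMaximalPrimeFilter S) (x y : α) :
    hmap S (himp x y) = himp3 (hmap S x) (hmap S y) := by
  rw [himp_eq_neg_odot, hmap_neg hS, hmap_odot hS, hmap_neg hS]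
  exact (by decide : ∀ a b : Fin 3, neg3 (odot3 a (neg3 b)) = himp3 a b) _ _

lemma hmap_isHom3 (hS : IsMaximalPrimeFilter S) : IsHom3 (hmap S) := by
  refine ⟨?_, hmap_of_mem (top_mem hS), hmap_inf hS, hmap_sup hS, hmap_odot hS, hmap_himp hS⟩
  exact hmap_of_neg_mem hS (by rw [neg_bot]; exact top_mem hS)

lemma hmap_preim (hS : IsMaximalPrimeFilter S) : hmap S ⁻¹' {2} = S := by
  ext x
  simp only [Set.mem_preimage, Set.mem_singleton_iff]
  constructor
  · intro h
    rcases trichotomy hS x with ⟨hx, _, _⟩ | ⟨_, _, ex⟩ | ⟨_, _, ex⟩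
    · exact hx
    · rw [ex] at h; exact absurd h (by decide)
    · rw [ex] at h; exact absurd h (by decide)
  · exact hmap_of_mem

end NMLem

namespace NMLem
open NMAlgebra

variable {α : Type*} [NMAlgebra α] {h : α → Fin 3}

lemma fin3_cases (a : Fin 3) : a = 0 ∨ a = 1 ∨ a = 2 := by revert a; decide
lemma hom_mono (hh : IsHom3 h) {x y : α} (hxy : x ≤ y) : h x ≤ h y := by
  have e : h y = max (h x) (h y) := by rw [← hh.2.2.2.1, sup_eq_right.mpr hxy]
  rw [e]; exact le_max_left _ _

lemma hom_neg (hh : IsHom3 h) (x : α) : h (neg x) = neg3 (h x) := by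
  have e : h (himp x ⊥) = himp3 (h x) (h ⊥) := hh.2.2.2.2.2 x ⊥
  rw [hh.1] at e
  rw [neg_def, e]
  exact (by decide : ∀ a : Fin 3, himp3 a 0 = neg3 a) _

lemma preim_mpf (hh : IsHom3 h) : IsMaximalPrimeFilter (h ⁻¹' {2}) := by
  have hmem : ∀ x : α, x ∈ h ⁻¹' {2} ↔ h x = 2 := fun x => Iff.rfl
  have hfil : IsFilter (h ⁻¹' {2}) := by
    refine ⟨⟨⊤, (hmem ⊤).mpr hh.2.1⟩, ?_, ?_⟩
    · intro x y hx hxy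
      have := hom_mono hh hxy
      rw [(hmem x).mp hx] at this
      exact (hmem y).mpr (le_antisymm ((by decide : ∀ a : Fin 3, a ≤ 2) _) this)
    · intro x y hx hy
      refine (hmem _).mpr ?_
      rw [hh.2.2.2.2.1, (hmem x).mp hx, (hmem y).mp hy]
      decide
  have hprop : ∀ T : Set α, IsFilter T → (⊥ : α) ∈ T → T = Set.univ := by
    intro T hT hbot
    exact Set.eq_univ_of_forall fun y => hT.2.1 ⊥ y hbot bot_le
  refine ⟨⟨hfil, ?_, ?_⟩, ?_⟩
  · intro H
    have : h ⊥ = 2 := (hmem ⊥).mp (H ▸ Set.mem_univ ⊥)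
    rw [hh.1] at this
    exact absurd this (by decide)
  · intro x y hxy
    have := (hmem _).mp hxy
    rw [hh.2.2.2.1] at this
    have key : ∀ a b : Fin 3, max a b = 2 → a = 2 ∨ b = 2 := by decide
    rcases key _ _ this with H | H
    · exact Or.inl ((hmem x).mpr H)
    · exact Or.inr ((hmem y).mpr H)
  · intro T hT hTne hsub
    refine Set.Subset.antisymm ?_ hsub
    intro t ht
    refine (hmem t).mpr ?_
    rcases fin3_cases (h t) with e | e | e
    · exfalso
      have hnt : neg t ∈ T := hsub (by rw [hmem, hom_neg hh, e]; decide)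
      have : (⊥ : α) ∈ T := odot_neg t ▸ hT.2.2 t (neg t) ht hnt
      exact hTne (hprop T hT this)
    · exfalso
      have ht2 : odot t t ∈ T := hT.2.2 t t ht ht
      have e2 : h (odot t t) = 0 := by rw [hh.2.2.2.2.1, e]; decide
      have hnt2 : neg (odot t t) ∈ T := hsub (by rw [hmem, hom_neg hh, e2]; decide)
      have : (⊥ : α) ∈ T := odot_neg (odot t t) ▸ hT.2.2 _ _ ht2 hnt2
      exact hTne (hprop T hT this)
    · exact e

end NMLem


/-- h ↦ h⁻¹({1}) is a bijection between NM homomorphisms A → 𝟯 and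
maximal prime filters of a finite NM algebra A. (The top of 𝟯 = Fin 3 is 2.) -/
theorem stmt11 {A : Type*} [NMAlgebra A] [Fintype A] :
    ∃ e : {h : A → Fin 3 // IsHom3 h} ≃ {S : Set A // NMAlgebra.IsMaximalPrimeFilter S},
      ∀ h : {h : A → Fin 3 // IsHom3 h},
        (e h : Set A) = (h : A → Fin 3) ⁻¹' {2} := by
  classical
  set f : {h : A → Fin 3 // IsHom3 h} → {S : Set A // NMAlgebra.IsMaximalPrimeFilter S} :=
    fun h => ⟨(h : A → Fin 3) ⁻¹' {2}, NMLem.preim_mpf h.2⟩ with hf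
  have hinj : Function.Injective f := by
    rintro ⟨h1, hh1⟩ ⟨h2, hh2⟩ heq
    have hpre : h1 ⁻¹' {2} = h2 ⁻¹' {2} := congrArg Subtype.val heq
    have hm : ∀ x : A, h1 x = 2 ↔ h2 x = 2 := by
      intro x
      constructor
      · intro hx; exact (Set.ext_iff.mp hpre x).mp hx
      · intro hx; exact (Set.ext_iff.mp hpre x).mpr hx
    have h0 : ∀ x : A, h1 x = 0 ↔ h2 x = 0 := by
      intro x
      have k : ∀ a : Fin 3, neg3 a = 2 ↔ a = 0 := by decide
      constructor
      · intro hx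
        have : h1 (NMAlgebra.neg x) = 2 := by rw [NMLem.hom_neg hh1, (k _).mpr hx]
        have := (hm _).mp this
        rw [NMLem.hom_neg hh2] at this
        exact (k _).mp this
      · intro hx
        have : h2 (NMAlgebra.neg x) = 2 := by rw [NMLem.hom_neg hh2, (k _).mpr hx]
        have := (hm _).mpr this
        rw [NMLem.hom_neg hh1] at this
        exact (k _).mp this
    refine Subtype.ext (funext fun x => ?_)
    show h1 x = h2 x
    rcases NMLem.fin3_cases (h1 x) with e | e | e
    · rw [e, ((h0 x).mp e).symm]
    · rcases NMLem.fin3_cases (h2 x) with e2 | e2 | e2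
      · exact absurd ((h0 x).mpr e2) (by rw [e]; decide)
      · rw [e, e2]
      · exact absurd ((hm x).mpr e2) (by rw [e]; decide)
    · rw [e, ((hm x).mp e).symm]
  have hsurj : Function.Surjective f := by
    rintro ⟨S, hS⟩
    exact ⟨⟨NMLem.hmap S, NMLem.hmap_isHom3 hS⟩, Subtype.ext (NMLem.hmap_preim hS)⟩
  exact ⟨Equiv.ofBijective f ⟨hinj, hsurj⟩, fun h => rfl⟩
end

section
/- Let A be a finite NM algebra and let ν : A → ℝ be its idempotent Euler characteristic. Then for every a ∈ A, ν(a) equals the number of NM homomorphisms h : A → 𝟯 from A to the three-element NM chain 𝟯 such that h(a) = 1. -/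
/-!
Both sides are valuations vanishing at `⊥`; for the right-hand side this is because an NM
homomorphism `h : A → 𝟯` sends `x ⊔ y` to the top of `𝟯` iff it sends `x` or `y` there, and `x ⊓ y`
iff it sends both. A valuation on a finite lattice is determined by its values at `⊥` and at the
join-irreducibles, so it remains to count, for a join-irreducible `g`, the homomorphisms sending `g`
to the top.

A homomorphism `h` is determined by the least element `m` of `h⁻¹(⊤)`, a nonzero
idempotent: `h x = ⊤` iff `m ≤ x`, and `h x = ⊥` iff `m ≤ ¬x`. If `g` is not idempotent, the
weak nilpotent minimum law gives `g ≤ g ⊙ g ⊔ ¬g`, hence `g ≤ ¬g`, and no `h` sends `g` to the top.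
If `g` is idempotent, two such homomorphisms `h, h'` have generators `m, m' ≤ g` with `m ⊙ m' ≠ ⊥`
(else `g ≤ ¬m ⊔ ¬m'`, and join-irreducibility would force `m ≤ ¬m` or `m' ≤ ¬m'`); so `h m'` is
neither `⊥` nor, `m'` being idempotent, the middle element of `𝟯`, whence `m ≤ m'`, and by symmetry
`m = m'`. One such homomorphism exists: modulo any prime filter `F` the relation `x → y ∈ F` is a total
preorder compatible with the operations, and comparing `x` with `¬x` in it is a homomorphism to `𝟯`;
for `F = ↑g` it sends `g` to the top.
-/

theorem isValuation_ncard {α X : Type*} [Lattice α] [Finite X] (φ : α → Set X)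
    (hsup : ∀ x y, φ (x ⊔ y) = φ x ∪ φ y) (hinf : ∀ x y, φ (x ⊓ y) = φ x ∩ φ y) :
    IsValuation fun x => ((φ x).ncard : ℝ) := fun x y => by
  dsimp only
  rw [hsup, hinf]
  exact_mod_cast (Set.ncard_union_add_ncard_inter _ _).symm

theorem IsValuation.eq_of_eq_on_joinIrred {α : Type*} [Lattice α] [OrderBot α] [WellFoundedLT α]
    {ν μ : α → ℝ} (hν : IsValuation ν) (hμ : IsValuation μ) (hbot : ν ⊥ = μ ⊥)
    (hirr : ∀ g, JoinIrred g → ν g = μ g) : ν = μ := by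
  funext a
  induction a using WellFoundedLT.induction with
  | _ a ih =>
    by_cases ha : a = ⊥
    · rw [ha, hbot]
    by_cases hja : JoinIrred a
    · exact hirr a hja
    obtain ⟨y, z, rfl, hy, hz⟩ : ∃ y z, a = y ⊔ z ∧ a ≠ y ∧ a ≠ z := by
      simpa [JoinIrred, ha] using hja
    have hyz : y < y ⊔ z := lt_of_le_of_ne le_sup_left (Ne.symm hy)
    have hzy : z < y ⊔ z := lt_of_le_of_ne le_sup_right (Ne.symm hz)
    linarith [hν y z, hμ y z, ih y hyz, ih z hzy, ih (y ⊓ z) (inf_le_left.trans_lt hyz)]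

theorem JoinIrred.le_or_le_of_le_sup {α : Type*} [DistribLattice α] [OrderBot α] {g x y : α}
    (hg : JoinIrred g) (h : g ≤ x ⊔ y) : g ≤ x ∨ g ≤ y := by
  have hsplit : g = g ⊓ x ⊔ g ⊓ y := by rw [← inf_sup_left, inf_eq_left.mpr h]
  exact (hg.2 _ _ hsplit).imp (fun h' => inf_eq_left.mp h'.symm) (fun h' => inf_eq_left.mp h'.symm)

theorem Fin3.ext_iff {p q : Fin 3} : p = q ↔ (p = 0 ↔ q = 0) ∧ (p = 2 ↔ q = 2) := by
  revert p q; decide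

theorem Fin3.le_iff {p q : Fin 3} : p ≤ q ↔ (q = 0 → p = 0) ∧ (p = 2 → q = 2) := by
  revert p q; decide

theorem Fin3.max_eq_two_iff {p q : Fin 3} : max p q = 2 ↔ p = 2 ∨ q = 2 := by revert p q; decide

theorem Fin3.min_eq_two_iff {p q : Fin 3} : min p q = 2 ↔ p = 2 ∧ q = 2 := by revert p q; decide

theorem neg3_eq_zero_iff {p : Fin 3} : neg3 p = 0 ↔ p = 2 := by revert p; decide

theorem neg3_eq_two_iff {p : Fin 3} : neg3 p = 2 ↔ p = 0 := by revert p; decide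

theorem odot3_comm (p q : Fin 3) : odot3 p q = odot3 q p := by revert p q; decide

namespace NMAlgebra

variable {A : Type*} [NMAlgebra A]

instance toCommMonoid : CommMonoid A where
  mul := odot
  one := ⊤
  mul_assoc := odot_assoc
  one_mul x := (odot_comm ⊤ x).trans (odot_top x)
  mul_one := odot_top
  mul_comm := odot_comm

theorem odot_eq_mul (x y : A) : odot x y = x * y := rfl

theorem le_himp_iff {x y z : A} : x ≤ himp y z ↔ x * y ≤ z := (residuation x y z).symm

theorem himp_mul_le (y z : A) : himp y z * y ≤ z := le_himp_iff.mp le_rfl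

instance : IsOrderedMonoid A where
  mul_le_mul_left _ _ h _ := le_himp_iff.mp (h.trans (le_himp_iff.mpr le_rfl))

theorem mul_le_left (x y : A) : x * y ≤ x :=
  (mul_le_mul_right (show y ≤ 1 from le_top) x).trans_eq (mul_one x)

theorem mul_le_right (x y : A) : x * y ≤ y := mul_comm y x ▸ mul_le_left y x

theorem mul_sup (x y z : A) : x * (y ⊔ z) = x * y ⊔ x * z := by
  refine le_antisymm ?_ (sup_le (mul_le_mul_right le_sup_left x) (mul_le_mul_right le_sup_right x))
  rw [mul_comm, ← le_himp_iff]
  exact sup_le (le_himp_iff.mpr ((mul_comm y x).trans_le le_sup_left))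
    (le_himp_iff.mpr ((mul_comm z x).trans_le le_sup_right))

theorem neg_neg (x : A) : neg (neg x) = x := involution x

theorem le_neg_iff_mul_eq_bot {x y : A} : x ≤ neg y ↔ x * y = ⊥ := le_himp_iff.trans le_bot_iff

theorem neg_mul_self (x : A) : neg x * x = ⊥ := le_neg_iff_mul_eq_bot.mp le_rfl

theorem neg_antitone : Antitone (neg : A → A) := fun _ y h =>
  le_neg_iff_mul_eq_bot.mpr (le_bot_iff.mp ((mul_le_mul_right h _).trans (neg_mul_self y).le))

theorem neg_bot : neg (⊥ : A) = ⊤ :=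
  top_le_iff.mp (le_neg_iff_mul_eq_bot.mpr (le_bot_iff.mp (mul_le_right _ _)))

theorem neg_top : neg (⊤ : A) = ⊥ := by rw [← neg_bot, neg_neg]

theorem neg_mul_eq_himp (x y : A) : neg (x * y) = himp x (neg y) :=
  eq_of_forall_le_iff fun z => by
    rw [le_neg_iff_mul_eq_bot, le_himp_iff, le_neg_iff_mul_eq_bot, mul_assoc]

theorem himp_eq_neg_mul_neg (x y : A) : himp x y = neg (x * neg y) := by
  rw [neg_mul_eq_himp, neg_neg]

theorem neg_sup (x y : A) : neg (x ⊔ y) = neg x ⊓ neg y :=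
  eq_of_forall_le_iff fun z => by
    simp only [le_inf_iff, le_neg_iff_mul_eq_bot, mul_sup, sup_eq_bot_iff]

theorem neg_inf (x y : A) : neg (x ⊓ y) = neg x ⊔ neg y := by
  rw [← neg_neg (neg x ⊔ neg y), neg_sup, neg_neg, neg_neg]

theorem le_mul_self_sup_neg (x : A) : x ≤ x * x ⊔ neg x := by
  have hwnm : neg (x * x) ⊔ himp (x ⊓ x) (x * x) = ⊤ := wnm x x
  rw [inf_idem, sup_comm] at hwnm
  calc x = x * (himp x (x * x) ⊔ neg (x * x)) := by rw [hwnm]; exact (mul_one x).symm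
    _ = x * himp x (x * x) ⊔ x * neg (x * x) := mul_sup _ _ _
    _ ≤ x * x ⊔ neg x := by
      refine sup_le_sup ((mul_comm _ _).trans_le (himp_mul_le _ _)) ?_
      rw [le_neg_iff_mul_eq_bot, mul_right_comm, mul_comm, neg_mul_self]

theorem mul_himp_le_of_mul_self {m : A} (hm : m * m = m) (y : A) : m * himp m y ≤ m * y :=
  calc m * himp m y = m * (himp m y * m) := by rw [mul_comm (himp m y), ← mul_assoc, hm]
    _ ≤ m * y := mul_le_mul_right (himp_mul_le m y) m

theorem inf_le_mul_of_mul_self {m m' : A} (hm : m * m = m) (hm' : m' * m' = m') :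
    m ⊓ m' ≤ m * m' :=
  calc m ⊓ m' = (m ⊓ m') * (himp m m' ⊔ himp m' m) := by
        rw [prelinearity]; exact (mul_one _).symm
    _ = (m ⊓ m') * himp m m' ⊔ (m ⊓ m') * himp m' m := mul_sup _ _ _
    _ ≤ m * m' := sup_le
      ((mul_le_mul_left inf_le_left _).trans (mul_himp_le_of_mul_self hm m'))
      ((mul_le_mul_left inf_le_right _).trans
        ((mul_himp_le_of_mul_self hm' m).trans_eq (mul_comm m' m)))

theorem eq_bot_of_mul_self_of_le_neg {m : A} (hm : m * m = m) (h : m ≤ neg m) : m = ⊥ :=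
  hm.symm.trans (le_neg_iff_mul_eq_bot.mp h)

theorem le_neg_self_of_joinIrred {g : A} (hg : JoinIrred g) (hi : g * g ≠ g) : g ≤ neg g :=
  (hg.le_or_le_of_le_sup (le_mul_self_sup_neg g)).resolve_left
    fun h => hi (le_antisymm (mul_le_left g g) h)

theorem mul_ne_bot_of_le_joinIrred {g m m' : A} (hg : JoinIrred g) (hm : m * m = m)
    (hm' : m' * m' = m') (hm0 : m ≠ ⊥) (hm0' : m' ≠ ⊥) (hmg : m ≤ g) (hmg' : m' ≤ g) :
    m * m' ≠ ⊥ := by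
  intro hbot
  have hcover : g ≤ neg m ⊔ neg m' :=
    calc g ≤ neg (m * m') := by rw [hbot, neg_bot]; exact le_top
      _ ≤ neg (m ⊓ m') := neg_antitone (inf_le_mul_of_mul_self hm hm')
      _ = neg m ⊔ neg m' := neg_inf m m'
  rcases hg.le_or_le_of_le_sup hcover with h | h
  · exact hm0 (eq_bot_of_mul_self_of_le_neg hm (hmg.trans h))
  · exact hm0' (eq_bot_of_mul_self_of_le_neg hm' (hmg'.trans h))

theorem himp_mul_himp_le (x y z : A) : himp x y * himp y z ≤ himp x z :=
  le_himp_iff.mpr <| calc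
    himp x y * himp y z * x = himp y z * (himp x y * x) := by rw [mul_comm (himp x y), mul_assoc]
    _ ≤ himp y z * y := mul_le_mul_right (himp_mul_le x y) _
    _ ≤ z := himp_mul_le y z

theorem himp_le_himp_neg (x y : A) : himp x y ≤ himp (neg y) (neg x) := by
  rw [le_himp_iff, le_neg_iff_mul_eq_bot, ← le_bot_iff]
  calc himp x y * neg y * x = neg y * (himp x y * x) := by rw [mul_right_comm, mul_comm]
    _ ≤ neg y * y := mul_le_mul_right (himp_mul_le x y) _
    _ = ⊥ := neg_mul_self y

theorem himp_le_himp_inf (x y : A) : himp x y ≤ himp x (x ⊓ y) :=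
  le_himp_iff.mpr (le_inf (mul_le_right _ _) (himp_mul_le x y))

section PrimeFilter

variable {F : Set A}

theorem IsPrimeFilter.mem_of_le (hF : IsPrimeFilter F) {x y : A} (hx : x ∈ F) (h : x ≤ y) :
    y ∈ F :=
  hF.1.2.1 x y hx h

theorem IsPrimeFilter.mul_mem (hF : IsPrimeFilter F) {x y : A} (hx : x ∈ F) (hy : y ∈ F) :
    x * y ∈ F :=
  hF.1.2.2 x y hx hy

theorem IsPrimeFilter.top_mem (hF : IsPrimeFilter F) : ⊤ ∈ F :=
  let ⟨_, hx⟩ := hF.1.1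
  hF.mem_of_le hx le_top

theorem IsPrimeFilter.bot_notMem (hF : IsPrimeFilter F) : ⊥ ∉ F := fun h =>
  hF.2.1 (Set.eq_univ_of_forall fun _ => hF.mem_of_le h bot_le)

theorem IsPrimeFilter.mem_or_mem (hF : IsPrimeFilter F) {x y : A} (h : x ⊔ y ∈ F) :
    x ∈ F ∨ y ∈ F :=
  hF.2.2 x y h

theorem isPrimeFilter_Ici {g : A} (hg : JoinIrred g) (hi : g * g = g) :
    IsPrimeFilter (Set.Ici g) :=
  ⟨⟨⟨g, le_rfl⟩, fun _ _ hx h => hx.trans h,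
      fun x y (hx : g ≤ x) (hy : g ≤ y) => hi ▸ mul_le_mul' hx hy⟩,
    fun h => hg.1 (le_bot_iff.mp (h ▸ Set.mem_univ ⊥ : ⊥ ∈ Set.Ici g)),
    fun _ _ h => hg.le_or_le_of_le_sup h⟩

def LeMod (F : Set A) (x y : A) : Prop := himp x y ∈ F

local notation:50 x:51 " ≼[" F "] " y:51 => LeMod F x y

theorem leMod_of_le (hF : IsPrimeFilter F) {x y : A} (h : x ≤ y) : x ≼[F] y :=
  hF.mem_of_le hF.top_mem (le_himp_iff.mpr ((mul_le_right ⊤ x).trans h))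

theorem leMod_trans (hF : IsPrimeFilter F) {x y z : A} (h₁ : x ≼[F] y) (h₂ : y ≼[F] z) :
    x ≼[F] z :=
  hF.mem_of_le (hF.mul_mem h₁ h₂) (himp_mul_himp_le x y z)

theorem leMod_total (hF : IsPrimeFilter F) (x y : A) : x ≼[F] y ∨ y ≼[F] x :=
  hF.mem_or_mem ((prelinearity x y).symm ▸ hF.top_mem)

theorem leMod_wnm (hF : IsPrimeFilter F) (x y : A) : x * y ≼[F] ⊥ ∨ x ⊓ y ≼[F] x * y :=
  hF.mem_or_mem ((wnm x y).symm ▸ hF.top_mem)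

theorem neg_leMod_neg (hF : IsPrimeFilter F) {x y : A} (h : x ≼[F] y) : neg y ≼[F] neg x :=
  hF.mem_of_le h (himp_le_himp_neg x y)

theorem leMod_inf (hF : IsPrimeFilter F) {x y : A} (h : x ≼[F] y) : x ≼[F] x ⊓ y :=
  hF.mem_of_le h (himp_le_himp_inf x y)

theorem mul_leMod_bot_iff {x y : A} : x * y ≼[F] ⊥ ↔ x ≼[F] neg y := by
  change neg (x * y) ∈ F ↔ _
  rw [neg_mul_eq_himp]
  rfl

theorem not_top_leMod_bot (hF : IsPrimeFilter F) : ¬ (⊤ : A) ≼[F] ⊥ := fun h =>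
  hF.bot_notMem (by change neg ⊤ ∈ F at h; rwa [neg_top] at h)

open Classical in
noncomputable def sign (F : Set A) (x : A) : Fin 3 :=
  if ¬ x ≼[F] neg x then 2 else if neg x ≼[F] x then 1 else 0

theorem sign_eq_two_iff {x : A} : sign F x = 2 ↔ ¬ x ≼[F] neg x := by
  unfold sign; split_ifs <;> simp_all

theorem sign_eq_zero_iff (hF : IsPrimeFilter F) {x : A} : sign F x = 0 ↔ ¬ neg x ≼[F] x := by
  unfold sign
  split_ifs with h₁ h₂ <;> simp_all
  exact (leMod_total hF x (neg x)).resolve_left h₁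

theorem sign_mono (hF : IsPrimeFilter F) {x y : A} (h : x ≼[F] y) : sign F x ≤ sign F y := by
  rw [Fin3.le_iff, sign_eq_zero_iff hF, sign_eq_zero_iff hF, sign_eq_two_iff, sign_eq_two_iff]
  refine ⟨fun hy hx => hy ?_, fun hx hy => hx ?_⟩
  · exact leMod_trans hF (neg_leMod_neg hF h) (leMod_trans hF hx h)
  · exact leMod_trans hF h (leMod_trans hF hy (neg_leMod_neg hF h))

theorem sign_congr (hF : IsPrimeFilter F) {x y : A} (h₁ : x ≼[F] y) (h₂ : y ≼[F] x) :
    sign F x = sign F y :=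
  le_antisymm (sign_mono hF h₁) (sign_mono hF h₂)

theorem sign_neg (hF : IsPrimeFilter F) (x : A) : sign F (neg x) = neg3 (sign F x) := by
  rw [Fin3.ext_iff, neg3_eq_zero_iff, neg3_eq_two_iff, sign_eq_zero_iff hF, sign_eq_zero_iff hF,
    sign_eq_two_iff, sign_eq_two_iff, neg_neg]
  exact ⟨Iff.rfl, Iff.rfl⟩

theorem sign_bot (hF : IsPrimeFilter F) : sign F (⊥ : A) = 0 := by
  rw [sign_eq_zero_iff hF, neg_bot]
  exact not_top_leMod_bot hF

theorem sign_top (hF : IsPrimeFilter F) : sign F (⊤ : A) = 2 := by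
  rw [← neg_bot, sign_neg hF, sign_bot hF]
  rfl

theorem sign_inf_of_leMod (hF : IsPrimeFilter F) {x y : A} (h : x ≼[F] y) :
    sign F (x ⊓ y) = sign F x :=
  sign_congr hF (leMod_of_le hF inf_le_left) (leMod_inf hF h)

theorem sign_inf (hF : IsPrimeFilter F) (x y : A) :
    sign F (x ⊓ y) = min (sign F x) (sign F y) := by
  rcases leMod_total hF x y with h | h
  · rw [sign_inf_of_leMod hF h, min_eq_left (sign_mono hF h)]
  · rw [inf_comm, sign_inf_of_leMod hF h, min_eq_right (sign_mono hF h)]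

theorem sign_sup (hF : IsPrimeFilter F) (x y : A) :
    sign F (x ⊔ y) = max (sign F x) (sign F y) := by
  rw [← neg_neg (x ⊔ y), neg_sup, sign_neg hF, sign_inf hF, sign_neg hF, sign_neg hF]
  generalize sign F x = p, sign F y = q
  revert p q; decide

theorem sign_mul_of_leMod (hF : IsPrimeFilter F) {x y : A} (h : x ≼[F] y) :
    sign F (x * y) = odot3 (sign F x) (sign F y) := by
  have hxy : sign F (x * y) ≤ sign F x := sign_mono hF (leMod_of_le hF (mul_le_left x y))
  by_cases hy : sign F y = 2
  · rw [hy, show odot3 (sign F x) 2 = sign F x by generalize sign F x = p; revert p; decide]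
    by_cases hx : sign F x = 0
    · rw [hx] at hxy ⊢; exact Fin.le_zero_iff.mp hxy
    rcases leMod_wnm hF x y with hbot | hinf
    · have hxny : x ≼[F] neg y := mul_leMod_bot_iff.mp hbot
      have hnxx : neg x ≼[F] x := by rwa [sign_eq_zero_iff hF, not_not] at hx
      refine absurd ?_ (sign_eq_two_iff.mp hy)
      have hynx : y ≼[F] neg x := by simpa only [neg_neg] using neg_leMod_neg hF hxny
      exact leMod_trans hF hynx (leMod_trans hF hnxx hxny)
    · exact le_antisymm hxy (sign_mono hF (leMod_trans hF (leMod_inf hF h) hinf))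
  · have hyny : y ≼[F] neg y := by rwa [sign_eq_two_iff, not_not] at hy
    have hbot : x * y ≼[F] ⊥ := mul_leMod_bot_iff.mpr (leMod_trans hF h hyny)
    have h0 : sign F (x * y) = 0 := Fin.le_zero_iff.mp (sign_bot hF ▸ sign_mono hF hbot)
    rw [h0]
    have hle := sign_mono hF h
    generalize sign F x = p, sign F y = q at hle hy
    revert p q; decide

theorem sign_mul (hF : IsPrimeFilter F) (x y : A) :
    sign F (x * y) = odot3 (sign F x) (sign F y) := by
  rcases leMod_total hF x y with h | h
  · exact sign_mul_of_leMod hF h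
  · rw [mul_comm, odot3_comm]; exact sign_mul_of_leMod hF h

theorem sign_himp (hF : IsPrimeFilter F) (x y : A) :
    sign F (himp x y) = himp3 (sign F x) (sign F y) := by
  rw [himp_eq_neg_mul_neg, sign_neg hF, sign_mul hF, sign_neg hF]
  generalize sign F x = p, sign F y = q
  revert p q; decide

theorem isHom3_sign (hF : IsPrimeFilter F) : IsHom3 (sign F) :=
  ⟨sign_bot hF, sign_top hF, sign_inf hF, sign_sup hF, sign_mul hF, sign_himp hF⟩

theorem sign_Ici_self {g : A} (hg : JoinIrred g) (hi : g * g = g) : sign (Set.Ici g) g = 2 := by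
  rw [sign_eq_two_iff]
  intro h
  change g ≤ himp g (neg g) at h
  rw [le_himp_iff, hi] at h
  exact hg.1 (eq_bot_of_mul_self_of_le_neg hi h)

end PrimeFilter

end NMAlgebra

namespace IsHom3

open NMAlgebra

variable {A : Type*} [NMAlgebra A] {h h' : A → Fin 3}

theorem monotone (hh : IsHom3 h) : Monotone h := fun x y hxy => by
  rw [← inf_eq_left.mpr hxy, hh.2.2.1]
  exact min_le_right _ _

theorem map_neg (hh : IsHom3 h) (x : A) : h (neg x) = neg3 (h x) := by
  rw [NMAlgebra.neg, hh.2.2.2.2.2, hh.1]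
  generalize h x = p
  revert p; decide

theorem map_ne_one_of_mul_self (hh : IsHom3 h) {m : A} (hm : m * m = m) : h m ≠ 1 := fun h1 => by
  have := hh.2.2.2.2.1 m m
  rw [odot_eq_mul, hm, h1] at this
  exact absurd this (by decide)

theorem map_ne_two_of_le_neg (hh : IsHom3 h) {x : A} (hx : x ≤ neg x) : h x ≠ 2 := fun h2 => by
  have := hh.monotone hx
  rw [hh.map_neg, h2] at this
  exact absurd this (by decide)

variable [Fintype A]

open Classical in
noncomputable def gen (h : A → Fin 3) : A := (Finset.univ.filter (h · = 2)).inf id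

theorem gen_le {x : A} (hx : h x = 2) : gen h ≤ x :=
  Finset.inf_le (Finset.mem_filter.mpr ⟨Finset.mem_univ x, hx⟩)

theorem map_gen (hh : IsHom3 h) : h (gen h) = 2 :=
  Finset.inf_induction (p := (h · = 2)) hh.2.1
    (fun _ h₁ _ h₂ => by simp only [hh.2.2.1, h₁, h₂, min_self])
    (fun _ hx => (Finset.mem_filter.mp hx).2)

theorem eq_two_iff (hh : IsHom3 h) {x : A} : h x = 2 ↔ gen h ≤ x := by
  refine ⟨gen_le, fun hle => ?_⟩
  have := hh.monotone hle
  rw [hh.map_gen] at this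
  omega

theorem eq_zero_iff (hh : IsHom3 h) {x : A} : h x = 0 ↔ gen h ≤ neg x := by
  rw [← hh.eq_two_iff, hh.map_neg, neg3_eq_two_iff]

theorem gen_ne_bot (hh : IsHom3 h) : gen h ≠ ⊥ := fun hbot => by
  have := hh.map_gen
  rw [hbot, hh.1] at this
  exact absurd this (by decide)

theorem gen_mul_self (hh : IsHom3 h) : gen h * gen h = gen h :=
  le_antisymm (mul_le_left _ _) (gen_le (by rw [← odot_eq_mul, hh.2.2.2.2.1, hh.map_gen]; rfl))

theorem ext_of_gen_eq (hh : IsHom3 h) (hh' : IsHom3 h') (hgen : gen h = gen h') : h = h' :=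
  funext fun _ => Fin3.ext_iff.mpr
    ⟨by rw [hh.eq_zero_iff, hh'.eq_zero_iff, hgen], by rw [hh.eq_two_iff, hh'.eq_two_iff, hgen]⟩

theorem gen_le_gen_of_joinIrred {g : A} (hg : JoinIrred g) (hh : IsHom3 h) (hh' : IsHom3 h')
    (h2 : h g = 2) (h2' : h' g = 2) : gen h ≤ gen h' := by
  rw [← hh.eq_two_iff]
  have h0 : h (gen h') ≠ 0 := by
    rw [Ne, hh.eq_zero_iff, le_neg_iff_mul_eq_bot]
    exact mul_ne_bot_of_le_joinIrred hg hh.gen_mul_self hh'.gen_mul_self hh.gen_ne_bot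
      hh'.gen_ne_bot (gen_le h2) (gen_le h2')
  have h1 := hh.map_ne_one_of_mul_self hh'.gen_mul_self
  omega

theorem eq_of_joinIrred {g : A} (hg : JoinIrred g) (hh : IsHom3 h) (hh' : IsHom3 h')
    (h2 : h g = 2) (h2' : h' g = 2) : h = h' :=
  ext_of_gen_eq hh hh' (le_antisymm (gen_le_gen_of_joinIrred hg hh hh' h2 h2')
    (gen_le_gen_of_joinIrred hg hh' hh h2' h2))

end IsHom3

section HomsToTop

open NMAlgebra

variable {A : Type*} [NMAlgebra A]

def homsToTop (c : A) : Set (A → Fin 3) := {h | IsHom3 h ∧ h c = 2}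

theorem homsToTop_sup (x y : A) : homsToTop (x ⊔ y) = homsToTop x ∪ homsToTop y := by
  ext h
  change _ ∧ _ ↔ (_ ∧ _) ∨ (_ ∧ _)
  rw [← and_or_left]
  exact and_congr_right fun hh => by rw [hh.2.2.2.1, Fin3.max_eq_two_iff]

theorem homsToTop_inf (x y : A) : homsToTop (x ⊓ y) = homsToTop x ∩ homsToTop y := by
  ext h
  change _ ∧ _ ↔ (_ ∧ _) ∧ (_ ∧ _)
  rw [← and_and_left]
  exact and_congr_right fun hh => by rw [hh.2.2.1, Fin3.min_eq_two_iff]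

theorem homsToTop_bot : homsToTop (⊥ : A) = ∅ :=
  Set.eq_empty_of_forall_notMem fun _ ⟨hh, h2⟩ => absurd (hh.1 ▸ h2) (by decide)

theorem homsToTop_eq_empty {g : A} (hg : JoinIrred g) (hi : g * g ≠ g) : homsToTop g = ∅ :=
  Set.eq_empty_of_forall_notMem fun _ ⟨hh, h2⟩ =>
    hh.map_ne_two_of_le_neg (le_neg_self_of_joinIrred hg hi) h2

theorem homsToTop_eq_singleton [Fintype A] {g : A} (hg : JoinIrred g) (hi : g * g = g) :
    homsToTop g = {sign (Set.Ici g)} :=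
  Set.eq_singleton_iff_unique_mem.mpr
    ⟨⟨isHom3_sign (isPrimeFilter_Ici hg hi), sign_Ici_self hg hi⟩, fun _ ⟨hh, h2⟩ =>
      hh.eq_of_joinIrred hg (isHom3_sign (isPrimeFilter_Ici hg hi)) h2 (sign_Ici_self hg hi)⟩

end HomsToTop

/-- χ⁺(a) equals the number of NM homomorphisms h : A → 𝟯 with
h(a) = 1. (The top of 𝟯 = Fin 3 is 2.) -/
theorem stmt12 {A : Type*} [NMAlgebra A] [Fintype A] (ν : A → ℝ)
    (hν : IsIdemEuler ν) (a : A) :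
    ν a = Nat.card {h : A → Fin 3 // IsHom3 h ∧ h a = 2} := by
  obtain ⟨hval, hbot, hirr⟩ := hν
  change ν a = Nat.card (homsToTop a)
  rw [Nat.card_coe_set_eq]
  refine congrFun (hval.eq_of_eq_on_joinIrred
    (isValuation_ncard homsToTop homsToTop_sup homsToTop_inf) ?_ fun g hg => ?_) a
  · simp [hbot, homsToTop_bot]
  · by_cases hi : g * g = g
    · simp [(hirr g hg).1 hi, homsToTop_eq_singleton hg hi]
    · simp [(hirr g hg).2 hi, homsToTop_eq_empty hg hi]
end
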